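/- arXiv:2209.11220 — 8 statements merged into one kernel-verified Lean document; each statement's English description precedes it below -/
import Mathlib

section
/- Under the stated setup, for every t ∈ ℝ, x ∈ ℝ^d, z ∈ Z and every p ∈ ℝ^L with p_i ≠ 0 for all i = 1,…,L, the phase-space transform U satisfies ∂_t U(t,x,z,p) + Σ_{i=1}^L sign(p_i) b_i(x) Δ_x ∂_{p_i} U(t,x,z,p) = 0; that is, U solves a phase-space PDE whose coefficients are independent of z. -/
open Real MeasureTheory

noncomputable section

/-- Partial derivative of `f` in the `i`-th coordinate at `x`. -/
def pd {ι : Type*} [DecidableEq ι] {E : Type*} [NormedAddCommGroup E] [NormedSpace ℝ E]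
    (i : ι) (f : (ι → ℝ) → E) (x : ι → ℝ) : E :=
  deriv (fun s => f (Function.update x i s)) (x i)

/-- Second partial derivative of `f` in the `i`-th coordinate at `x`. -/
def pd2 {ι : Type*} [DecidableEq ι] {E : Type*} [NormedAddCommGroup E] [NormedSpace ℝ E]
    (i : ι) (f : (ι → ℝ) → E) (x : ι → ℝ) : E :=
  deriv (deriv (fun s => f (Function.update x i s))) (x i)

/-- Laplacian of `f` at `x`. -/
def plap {ι : Type*} [DecidableEq ι] [Fintype ι] {E : Type*} [NormedAddCommGroup E]
    [NormedSpace ℝ E] (f : (ι → ℝ) → E) (x : ι → ℝ) : E :=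
  ∑ i, pd2 i f x

lemma exp_neg_abs_hasDerivAt (c : ℝ) {s : ℝ} (hs : s ≠ 0) :
    HasDerivAt (fun r => Real.exp (-c * |r|))
      (Real.sign s * -c * Real.exp (-c * |s|)) s := by
  rcases hs.lt_or_gt with h | h
  · have h1 : HasDerivAt (fun r : ℝ => Real.exp (c * r)) (Real.exp (c * s) * c) s := by
      simpa using ((hasDerivAt_id s).const_mul c).exp
    have heq : (fun r => Real.exp (-c * |r|)) =ᶠ[nhds s] (fun r : ℝ => Real.exp (c * r)) := by
      filter_upwards [Iio_mem_nhds h] with r hr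
      rw [abs_of_neg hr]; ring_nf
    have := h1.congr_of_eventuallyEq heq
    have : HasDerivAt (fun r => Real.exp (-c * |r|)) (Real.exp (c * s) * c) s := this
    convert this using 1
    rw [Real.sign_of_neg h, abs_of_neg h]; ring_nf
  · have h1 : HasDerivAt (fun r : ℝ => Real.exp (-c * r)) (Real.exp (-c * s) * -c) s := by
      simpa using ((hasDerivAt_id s).const_mul (-c)).exp
    have heq : (fun r => Real.exp (-c * |r|)) =ᶠ[nhds s] (fun r : ℝ => Real.exp (-c * r)) := by
      filter_upwards [Ioi_mem_nhds h] with r hr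
      rw [abs_of_pos hr]
    have := h1.congr_of_eventuallyEq heq
    have : HasDerivAt (fun r => Real.exp (-c * |r|)) (Real.exp (-c * s) * -c) s := this
    convert this using 1
    rw [Real.sign_of_pos h, abs_of_pos h]; ring

lemma pd2_const_mul {ι : Type*} [DecidableEq ι] (i : ι) (c : ℝ) (f : (ι → ℝ) → ℝ)
    (x : ι → ℝ) : pd2 i (fun y => c * f y) x = c * pd2 i f x := by
  unfold pd2
  rw [deriv_const_mul_field' (v := fun s => f (Function.update x i s)) c,
    deriv_const_mul_field]

lemma plap_const_mul {ι : Type*} [DecidableEq ι] [Fintype ι] (c : ℝ) (f : (ι → ℝ) → ℝ)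
    (x : ι → ℝ) : plap (fun y => c * f y) x = c * plap f x := by
  unfold plap
  rw [Finset.mul_sum]
  exact Finset.sum_congr rfl fun i _ => pd2_const_mul i c f x

/-- the phase-space transform `U` of a solution of the heat equation with
uncertain coefficient `a(x,z) = ∑ i, a i z * b i x` satisfies, away from `{∃ i, p i = 0}`,
the deterministic phase-space equation
`∂ₜ U + ∑ i, sign (p i) * b i x * Δₓ ∂_{pᵢ} U = 0`. -/
theorem heat_phase_space_transform
    (d L : ℕ) (hd : 1 ≤ d) (hL : 1 ≤ L)
    (Z : Type*) [Nonempty Z]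
    (a : Fin L → Z → ℝ) (ha : ∀ i z, 0 < a i z)
    (b : Fin L → (Fin d → ℝ) → ℝ) (hb : ∀ i, ContDiff ℝ (⊤ : ℕ∞) (b i))
    (u : ℝ → (Fin d → ℝ) → Z → ℝ)
    (hu : ∀ z, ContDiff ℝ (⊤ : ℕ∞) (fun tx : ℝ × (Fin d → ℝ) => u tx.1 tx.2 z))
    (hheat : ∀ t x z, deriv (fun s => u s x z) t
      = (∑ i, a i z * b i x) * plap (fun y => u t y z) x)
    (U : ℝ → (Fin d → ℝ) → Z → (Fin L → ℝ) → ℝ)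
    (hU : ∀ t x z p, U t x z p
      = (∏ i, a i z / 2 * Real.exp (-(a i z) * |p i|)) * u t x z) :
    ∀ t x z (p : Fin L → ℝ), (∀ i, p i ≠ 0) →
      deriv (fun s => U s x z p) t
        + ∑ i, Real.sign (p i) * b i x
            * plap (fun y => pd i (fun q => U t y z q) p) x = 0 := by
  intro t x z p hp
  set C : ℝ := ∏ i, a i z / 2 * Real.exp (-(a i z) * |p i|) with hC
  -- time derivative
  have hT : deriv (fun s => U s x z p) t = C * deriv (fun s => u s x z) t := by
    simp only [hU]
    exact deriv_const_mul_field C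
  -- p-derivative
  have hpd : ∀ (y : Fin d → ℝ) i, pd i (fun q => U t y z q) p
      = (-(a i z) * Real.sign (p i) * C) * u t y z := by
    intro y i
    unfold pd
    have hprod : ∀ s : ℝ, (∏ j, a j z / 2 * Real.exp (-(a j z) * |Function.update p i s j|))
        = (a i z / 2 * Real.exp (-(a i z) * |s|))
          * ∏ j ∈ Finset.univ.erase i, a j z / 2 * Real.exp (-(a j z) * |p j|) := by
      intro s
      have : (fun j => a j z / 2 * Real.exp (-(a j z) * |Function.update p i s j|))
          = Function.update (fun j => a j z / 2 * Real.exp (-(a j z) * |p j|)) i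
              (a i z / 2 * Real.exp (-(a i z) * |s|)) := by
        funext j
        rcases eq_or_ne j i with rfl | hj
        · simp
        · rw [Function.update_of_ne hj, Function.update_of_ne hj]
      rw [this, Finset.prod_update_of_mem (Finset.mem_univ i)]
      congr 1
      · exact (Finset.prod_congr (by ext j; simp [Finset.mem_erase, and_comm]) fun _ _ => rfl)
    have hfun : (fun s => U t y z (Function.update p i s))
        = fun s => (a i z / 2 * Real.exp (-(a i z) * |s|))
            * ((∏ j ∈ Finset.univ.erase i, a j z / 2 * Real.exp (-(a j z) * |p j|)) * u t y z) := by
      funext s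
      rw [hU, hprod s, mul_assoc]
    rw [hfun]
    set K : ℝ := ∏ j ∈ Finset.univ.erase i, a j z / 2 * Real.exp (-(a j z) * |p j|) with hK
    have hd1 : HasDerivAt (fun s => a i z / 2 * Real.exp (-(a i z) * |s|))
        (a i z / 2 * (Real.sign (p i) * -(a i z) * Real.exp (-(a i z) * |p i|))) (p i) :=
      (exp_neg_abs_hasDerivAt (a i z) (hp i)).const_mul _
    rw [deriv_mul_const_field, hd1.deriv]
    have hCK : C = (a i z / 2 * Real.exp (-(a i z) * |p i|)) * K := by
      rw [hC, hK, ← Finset.prod_erase_mul Finset.univ _ (Finset.mem_univ i), mul_comm]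
    rw [hCK]; ring
  -- laplacian of p-derivative
  have hlap : ∀ i, plap (fun y => pd i (fun q => U t y z q) p) x
      = (-(a i z) * Real.sign (p i) * C) * plap (fun y => u t y z) x := by
    intro i
    have : (fun y => pd i (fun q => U t y z q) p)
        = fun y => (-(a i z) * Real.sign (p i) * C) * u t y z := by
      funext y; exact hpd y i
    rw [this, plap_const_mul]
  have hsign : ∀ i : Fin L, Real.sign (p i) * Real.sign (p i) = 1 := by
    intro i
    rcases (hp i).lt_or_gt with h | h
    · rw [Real.sign_of_neg h]; norm_num
    · rw [Real.sign_of_pos h]; norm_num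
  rw [hT, hheat t x z]
  have hdist : C * ((∑ i, a i z * b i x) * plap (fun y => u t y z) x)
      = ∑ i, C * (a i z * b i x * plap (fun y => u t y z) x) := by
    rw [Finset.sum_mul, Finset.mul_sum]
  rw [hdist]
  have : ∀ i : Fin L, Real.sign (p i) * b i x
      * plap (fun y => pd i (fun q => U t y z q) p) x
      = -(C * (a i z * b i x * plap (fun y => u t y z) x)) := by
    intro i
    rw [hlap i]
    linear_combination (-(a i z) * b i x * C * plap (fun y => u t y z) x) * hsign i
  rw [Finset.sum_congr rfl fun i _ => this i]
  rw [← Finset.sum_add_distrib]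
  apply Finset.sum_eq_zero
  intro i _
  ring
end
end

section
/- Under the stated setup, given samples z_1,…,z_M ∈ Z, define V(t,x,p) = (1/M) Σ_{m=1}^M U(t,x,z_m,p). Then: (i) for every t, x and every p ∈ ℝ^L with p_i ≠ 0 for all i, V satisfies ∂_t V(t,x,p) + Σ_{i=1}^L sign(p_i) b_i(x) Δ_x ∂_{p_i} V(t,x,p) = 0; and (ii) for every t and x, ∫_{ℝ^L} V(t,x,p) dp = (1/M) Σ_{m=1}^M u(t,x,z_m), i.e. integrating V over p yields the ensemble average of the M solutions of the original heat equation. -/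
open Real MeasureTheory
open scoped ContDiff

noncomputable section

lemma aux_integrable (c : ℝ) (hc : 0 < c) :
    Integrable (fun s : ℝ => c / 2 * Real.exp (-c * |s|)) := by
  apply Integrable.const_mul
  have h1 : IntegrableOn (fun s : ℝ => Real.exp (-c * |s|)) (Set.Ioi (0:ℝ)) := by
    refine (exp_neg_integrableOn_Ioi 0 hc).congr_fun (fun s hs => ?_) measurableSet_Ioi
    rw [abs_of_pos hs]
  have h2 : IntegrableOn (fun s : ℝ => Real.exp (-c * |s|)) (Set.Iic (0:ℝ)) := by
    rw [← Measure.map_neg_eq_self (volume : Measure ℝ)]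
    have m : MeasurableEmbedding fun x : ℝ => -x := (Homeomorph.neg ℝ).measurableEmbedding
    rw [m.integrableOn_map_iff]
    simp_rw [Function.comp_def, abs_neg, Set.neg_preimage, Set.neg_Iic, neg_zero]
    exact (integrableOn_Ici_iff_integrableOn_Ioi).mpr h1
  have h3 := h2.union h1
  rwa [Set.Iic_union_Ioi, integrableOn_univ] at h3

lemma aux_integral (c : ℝ) (hc : 0 < c) :
    (∫ s : ℝ, c / 2 * Real.exp (-c * |s|)) = 1 := by
  rw [MeasureTheory.integral_const_mul]
  have h1 : (∫ s : ℝ, Real.exp (-c * |s|)) = 2 * ∫ s in Set.Ioi (0:ℝ), Real.exp (-c * s) :=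
    integral_comp_abs (f := fun s => Real.exp (-c * s))
  have h2 : (∫ s in Set.Ioi (0:ℝ), Real.exp (-c * s)) = c⁻¹ := by
    have := integral_comp_mul_left_Ioi (fun y => Real.exp (-y)) 0 hc
    simp only [mul_zero, integral_exp_neg_Ioi_zero, smul_eq_mul, mul_one, neg_mul] at this
    simpa [neg_mul] using this
  rw [h1, h2]
  field_simp

lemma aux_hasDeriv (c : ℝ) {s : ℝ} (hs : s ≠ 0) :
    HasDerivAt (fun r : ℝ => Real.exp (-c * |r|))
      (-(c * Real.sign s) * Real.exp (-c * |s|)) s := by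
  have h1 : HasDerivAt (fun r : ℝ => |r|) (Real.sign s) s := by
    rcases hs.lt_or_gt with h | h
    · simpa [Real.sign_of_neg h] using hasDerivAt_abs_neg h
    · simpa [Real.sign_of_pos h] using hasDerivAt_abs_pos h
  have h2 := (h1.const_mul (-c)).exp
  convert h2 using 1
  ring

lemma aux_sign (x : ℝ) (hx : x ≠ 0) : Real.sign x * Real.sign x = 1 := by
  rcases hx.lt_or_gt with h | h <;>
    simp [Real.sign_of_neg, Real.sign_of_pos, h]

/-- the averaged phase-space transform
`V(t,x,p) = (1/M) ∑ₘ U(t,x,zₘ,p)` of `M` samples of the heat equation with uncertain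
coefficient satisfies (i) the deterministic phase-space equation
`∂ₜ V + ∑ i, sign(pᵢ) bᵢ(x) Δₓ ∂_{pᵢ} V = 0` away from `{∃ i, p i = 0}`, and
(ii) `∫_{ℝ^L} V(t,x,p) dp = (1/M) ∑ₘ u(t,x,zₘ)`. -/
theorem heat_phase_space_ensemble_average
    (d L M : ℕ) (hd : 1 ≤ d) (hL : 1 ≤ L) (hM : 1 ≤ M)
    (Z : Type*) [Nonempty Z]
    (a : Fin L → Z → ℝ) (ha : ∀ i z, 0 < a i z)
    (b : Fin L → (Fin d → ℝ) → ℝ) (hb : ∀ i, ContDiff ℝ (⊤ : ℕ∞) (b i))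
    (u : ℝ → (Fin d → ℝ) → Z → ℝ)
    (hu : ∀ z, ContDiff ℝ (⊤ : ℕ∞) (fun tx : ℝ × (Fin d → ℝ) => u tx.1 tx.2 z))
    (hheat : ∀ t x z, deriv (fun s => u s x z) t
      = (∑ i, a i z * b i x) * plap (fun y => u t y z) x)
    (U : ℝ → (Fin d → ℝ) → Z → (Fin L → ℝ) → ℝ)
    (hU : ∀ t x z p, U t x z p
      = (∏ i, a i z / 2 * Real.exp (-(a i z) * |p i|)) * u t x z)
    (zs : Fin M → Z)
    (V : ℝ → (Fin d → ℝ) → (Fin L → ℝ) → ℝ)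
    (hV : ∀ t x p, V t x p = (1 / (M : ℝ)) * ∑ m, U t x (zs m) p) :
    (∀ t x (p : Fin L → ℝ), (∀ i, p i ≠ 0) →
      deriv (fun s => V s x p) t
        + ∑ i, Real.sign (p i) * b i x
            * plap (fun y => pd i (fun q => V t y q) p) x = 0)
    ∧ (∀ t x, Integrable (fun p : Fin L → ℝ => V t x p)
        ∧ (∫ p : Fin L → ℝ, V t x p) = (1 / (M : ℝ)) * ∑ m, u t x (zs m)) := by
  classical
  set K : Z → (Fin L → ℝ) → ℝ :=
    fun z p => ∏ i, a i z / 2 * Real.exp (-(a i z) * |p i|) with hKdef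
  have hVf : ∀ t x p, V t x p = (1 / (M : ℝ)) * ∑ m, K (zs m) p * u t x (zs m) := by
    intro t x p
    rw [hV]
    congr 1
    exact Finset.sum_congr rfl fun m _ => hU t x (zs m) p
  -- smoothness of 1-d slices
  have hline_t : ∀ (x : Fin d → ℝ) z, ContDiff ℝ ∞ fun s : ℝ => u s x z := by
    intro x z
    exact ((hu z).of_le (by simp)).comp (contDiff_id.prodMk contDiff_const)
  have hupdate : ∀ (x : Fin d → ℝ) (j : Fin d),
      ContDiff ℝ ∞ (fun s : ℝ => Function.update x j s) := by
    intro x j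
    apply contDiff_pi.2
    intro k
    by_cases h : k = j
    · subst h
      simp only [Function.update_self]
      exact contDiff_id
    · simp only [Function.update_of_ne h]
      exact contDiff_const
  have hline_x : ∀ t z (x : Fin d → ℝ) (j : Fin d),
      ContDiff ℝ ∞ (fun s : ℝ => u t (Function.update x j s) z) := by
    intro t z x j
    exact ((hu z).of_le (by simp)).comp (contDiff_const.prodMk (hupdate x j))
  -- time derivative of V
  have hDt : ∀ t x p, HasDerivAt (fun s => V s x p)
      ((1 / (M : ℝ)) * ∑ m, K (zs m) p * deriv (fun s => u s x (zs m)) t) t := by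
    intro t x p
    have he : (fun s => V s x p)
        = fun s => (1 / (M : ℝ)) * ∑ m, K (zs m) p * u s x (zs m) :=
      funext fun s => hVf s x p
    rw [he]
    exact (HasDerivAt.fun_sum fun m _ =>
      (((contDiff_infty_iff_deriv.mp (hline_t x (zs m))).1 t).hasDerivAt.const_mul
        (K (zs m) p))).const_mul _
  -- derivative of K in pᵢ
  have hKupd : ∀ z (p : Fin L → ℝ) (i : Fin L) (s : ℝ),
      K z (Function.update p i s)
        = (a i z / 2 * Real.exp (-(a i z) * |s|))
          * ∏ j ∈ Finset.univ.erase i, (a j z / 2 * Real.exp (-(a j z) * |p j|)) := by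
    intro z p i s
    simp only [hKdef]
    rw [← Finset.mul_prod_erase Finset.univ _ (Finset.mem_univ i)]
    simp only [Function.update_self]
    congr 1
    exact Finset.prod_congr rfl fun j hj => by
      rw [Function.update_of_ne (Finset.ne_of_mem_erase hj)]
  have hKd : ∀ z (p : Fin L → ℝ) (i : Fin L), p i ≠ 0 →
      HasDerivAt (fun s => K z (Function.update p i s))
        (-(a i z * Real.sign (p i)) * K z p) (p i) := by
    intro z p i hpi
    have h1 : HasDerivAt (fun s : ℝ => a i z / 2 * Real.exp (-(a i z) * |s|))
        (a i z / 2 * (-(a i z * Real.sign (p i)) * Real.exp (-(a i z) * |p i|))) (p i) :=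
      (aux_hasDeriv _ hpi).const_mul _
    have h2 := h1.mul_const
      (∏ j ∈ Finset.univ.erase i, (a j z / 2 * Real.exp (-(a j z) * |p j|)))
    have he : (fun s => K z (Function.update p i s))
        = fun s => (a i z / 2 * Real.exp (-(a i z) * |s|))
          * ∏ j ∈ Finset.univ.erase i, (a j z / 2 * Real.exp (-(a j z) * |p j|)) :=
      funext (hKupd z p i)
    rw [he]
    refine h2.congr_deriv ?_
    rw [show K z p = K z (Function.update p i (p i)) by rw [Function.update_eq_self],
      hKupd]
    ring
  -- pᵢ-derivative of V
  have hpdV : ∀ t y (p : Fin L → ℝ), (∀ i, p i ≠ 0) → ∀ i,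
      pd i (fun q => V t y q) p
        = (1 / (M : ℝ)) * ∑ m,
            (-(a i (zs m) * Real.sign (p i)) * K (zs m) p) * u t y (zs m) := by
    intro t y p hp i
    have he : (fun s => V t y (Function.update p i s))
        = fun s => (1 / (M : ℝ)) * ∑ m, K (zs m) (Function.update p i s) * u t y (zs m) :=
      funext fun s => hVf t y (Function.update p i s)
    unfold pd
    rw [he]
    exact ((HasDerivAt.fun_sum fun m _ =>
      (hKd (zs m) p i (hp i)).mul_const (u t y (zs m))).const_mul _).deriv
  -- linearity of plap over ensemble sums
  have hpd2lin : ∀ t (x : Fin d → ℝ) (c : Fin M → ℝ) (j : Fin d),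
      pd2 j (fun y => (1 / (M : ℝ)) * ∑ m, c m * u t y (zs m)) x
        = (1 / (M : ℝ)) * ∑ m, c m * pd2 j (fun y => u t y (zs m)) x := by
    intro t x c j
    unfold pd2
    have hDF : deriv (fun s => (1 / (M : ℝ)) * ∑ m, c m * u t (Function.update x j s) (zs m))
        = fun s => (1 / (M : ℝ)) * ∑ m,
            c m * deriv (fun r => u t (Function.update x j r) (zs m)) s := by
      funext s
      exact ((HasDerivAt.fun_sum fun m _ =>
        (((contDiff_infty_iff_deriv.mp (hline_x t (zs m) x j)).1 s).hasDerivAt.const_mul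
          (c m))).const_mul _).deriv
    show deriv (deriv (fun s => (1 / (M : ℝ)) * ∑ m, c m * u t (Function.update x j s) (zs m)))
        (x j) = _
    rw [hDF]
    have hd2 : ∀ m : Fin M, DifferentiableAt ℝ
        (deriv (fun r => u t (Function.update x j r) (zs m))) (x j) := by
      intro m
      exact (contDiff_infty_iff_deriv.mp
        ((contDiff_infty_iff_deriv.mp (hline_x t (zs m) x j)).2)).1 (x j)
    exact ((HasDerivAt.fun_sum fun m _ =>
      ((hd2 m).hasDerivAt.const_mul (c m))).const_mul _).deriv
  have hplaplin : ∀ t (x : Fin d → ℝ) (c : Fin M → ℝ),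
      plap (fun y => (1 / (M : ℝ)) * ∑ m, c m * u t y (zs m)) x
        = (1 / (M : ℝ)) * ∑ m, c m * plap (fun y => u t y (zs m)) x := by
    intro t x c
    unfold plap
    rw [Finset.sum_congr rfl fun j _ => hpd2lin t x c j, ← Finset.mul_sum,
      Finset.sum_comm]
    congr 1
    exact Finset.sum_congr rfl fun m _ => (Finset.mul_sum _ _ _).symm
  constructor
  · -- part (i)
    intro t x p hp
    have h1 : deriv (fun s => V s x p) t
        = (1 / (M : ℝ)) * ∑ m, K (zs m) p
            * ((∑ i, a i (zs m) * b i x) * plap (fun y => u t y (zs m)) x) := by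
      rw [(hDt t x p).deriv]
      congr 1
      exact Finset.sum_congr rfl fun m _ => by rw [hheat]
    have h2 : ∀ i : Fin L, plap (fun y => pd i (fun q => V t y q) p) x
        = (1 / (M : ℝ)) * ∑ m,
            (-(a i (zs m) * Real.sign (p i)) * K (zs m) p)
              * plap (fun y => u t y (zs m)) x := by
      intro i
      have he : (fun y => pd i (fun q => V t y q) p)
          = fun y => (1 / (M : ℝ)) * ∑ m,
              (-(a i (zs m) * Real.sign (p i)) * K (zs m) p) * u t y (zs m) :=
        funext fun y => hpdV t y p hp i
      rw [he]
      exact hplaplin t x _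
    rw [h1, Finset.sum_congr rfl fun (i : Fin L) (_ : i ∈ Finset.univ) => by rw [h2 i]]
    have hsign : ∀ i : Fin L, Real.sign (p i) * Real.sign (p i) = 1 :=
      fun i => aux_sign _ (hp i)
    have e2 : ∑ i, Real.sign (p i) * b i x
          * ((1 / (M : ℝ)) * ∑ m, (-(a i (zs m) * Real.sign (p i)) * K (zs m) p)
              * plap (fun y => u t y (zs m)) x)
        = (1 / (M : ℝ)) * ∑ m, ∑ i,
            (-(a i (zs m) * b i x * (K (zs m) p * plap (fun y => u t y (zs m)) x))) := by
      simp only [Finset.mul_sum]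
      rw [Finset.sum_comm]
      refine Finset.sum_congr rfl fun m _ => Finset.sum_congr rfl fun i _ => ?_
      have hs := hsign i
      linear_combination (-(1 / (M : ℝ)) * a i (zs m) * b i x * K (zs m) p
        * plap (fun y => u t y (zs m)) x) * hs
    rw [e2]
    have e1 : ∀ m : Fin M, K (zs m) p
          * ((∑ i, a i (zs m) * b i x) * plap (fun y => u t y (zs m)) x)
        = ∑ i, a i (zs m) * b i x * (K (zs m) p * plap (fun y => u t y (zs m)) x) := by
      intro m
      rw [Finset.sum_mul, Finset.mul_sum]
      exact Finset.sum_congr rfl fun i _ => by ring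
    rw [Finset.sum_congr rfl fun (m : Fin M) (_ : m ∈ Finset.univ) => e1 m, ← mul_add,
      ← Finset.sum_add_distrib]
    have : ∀ m : Fin M,
        (∑ i, a i (zs m) * b i x * (K (zs m) p * plap (fun y => u t y (zs m)) x))
          + ∑ i, (-(a i (zs m) * b i x * (K (zs m) p * plap (fun y => u t y (zs m)) x)))
        = 0 := by
      intro m
      rw [← Finset.sum_add_distrib]
      simp
    rw [Finset.sum_congr rfl fun (m : Fin M) (_ : m ∈ Finset.univ) => this m]
    simp
  · -- part (ii)
    intro t x
    have hKint : ∀ z, Integrable (fun p : Fin L → ℝ => K z p) := by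
      intro z
      exact Integrable.fintype_prod
        (f := fun i (s : ℝ) => a i z / 2 * Real.exp (-(a i z) * |s|))
        (fun i => aux_integrable _ (ha i z))
    have hterm : ∀ m, Integrable (fun p : Fin L → ℝ => K (zs m) p * u t x (zs m)) :=
      fun m => (hKint (zs m)).mul_const _
    have heV : (fun p : Fin L → ℝ => V t x p)
        = fun p => (1 / (M : ℝ)) * ∑ m, K (zs m) p * u t x (zs m) :=
      funext fun p => hVf t x p
    have hVint : Integrable (fun p : Fin L → ℝ => V t x p) := by
      rw [heV]
      exact (integrable_finset_sum _ fun m _ => hterm m).const_mul _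
    refine ⟨hVint, ?_⟩
    rw [heV, MeasureTheory.integral_const_mul,
      integral_finset_sum _ fun m _ => hterm m]
    congr 1
    refine Finset.sum_congr rfl fun m _ => ?_
    rw [MeasureTheory.integral_mul_const]
    have hK1 : (∫ p : Fin L → ℝ, K (zs m) p) = 1 := by
      have h : (∫ x : Fin L → ℝ, ∏ i, a i (zs m) / 2 * Real.exp (-(a i (zs m)) * |x i|))
          = ∏ i, ∫ s : ℝ, a i (zs m) / 2 * Real.exp (-(a i (zs m)) * |s|) :=
        MeasureTheory.integral_fintype_prod_eq_prod (ι := Fin L)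
          (fun i (s : ℝ) => a i (zs m) / 2 * Real.exp (-(a i (zs m)) * |s|))
      simp only [hKdef]
      rw [h]
      rw [Finset.prod_congr rfl fun (i : Fin L) (_ : i ∈ Finset.univ) =>
        aux_integral _ (ha i (zs m))]
      simp
    rw [hK1, one_mul]
end
end

section
/- Under the stated setup, for every t ∈ ℝ, x ∈ ℝ^d, v ∈ V, z ∈ Z and every p ∈ ℝ^L with p_i ≠ 0 for all i, the transformed function F′ satisfies ∂_t F′(t,x,v,z,p) + v·∇_x F′(t,x,v,z,p) = − Σ_{i=1}^L sign(p_i) b_i(x) [ (1/Ω) ∫_V ∂_{p_i} F′(t,x,v′,z,p) dv′ − ∂_{p_i} F′(t,x,v,z,p) ]; that is, F′ solves a phase-space linear Boltzmann equation whose coefficients are independent of z. -/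
open Real MeasureTheory

noncomputable section

lemma hasDerivAt_abs' {c : ℝ} (hc : c ≠ 0) :
    HasDerivAt (fun s : ℝ => |s|) (Real.sign c) c := by
  rcases hc.lt_or_gt with h | h
  · rw [Real.sign_of_neg h]
    have hid : HasDerivAt (fun s : ℝ => -s) (-1) c := (hasDerivAt_id c).neg
    refine hid.congr_of_eventuallyEq ?_
    filter_upwards [isOpen_Iio.eventually_mem h] with s hs
    exact abs_of_neg hs
  · rw [Real.sign_of_pos h]
    refine (hasDerivAt_id c).congr_of_eventuallyEq ?_
    filter_upwards [isOpen_Ioi.eventually_mem h] with s hs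
    exact abs_of_pos hs

lemma diff_update {d : ℕ} (x : Fin d → ℝ) (j : Fin d) :
    Differentiable ℝ (fun s : ℝ => Function.update x j s) := by
  have h : (fun s : ℝ => Function.update x j s)
      = fun s => Function.update x j 0 + s • Pi.single j (1 : ℝ) := by
    funext s k
    rcases eq_or_ne k j with rfl | hk
    · simp
    · simp [Function.update_of_ne hk, Pi.single_apply, hk]
  rw [h]
  exact (differentiable_const _).add (differentiable_id.smul_const _)

/-- the phase-space transform
`F'(t,x,v,z,p) = (∏ i, (aᵢ(z)/2) e^{-aᵢ(z)|pᵢ|}) f(t,x,v,z)` of a solution of the linear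
Boltzmann equation with isotropic scattering and uncertain scattering coefficient
`a(x,z) = ∑ i, aᵢ(z) bᵢ(x)` satisfies, for `v` in the velocity domain and all `p` with
`pᵢ ≠ 0`, the deterministic phase-space linear Boltzmann equation
`∂ₜF' + v·∇ₓF' = -∑ i sign(pᵢ) bᵢ(x) [(1/Ω) ∫_V ∂_{pᵢ}F' dv' - ∂_{pᵢ}F']`. -/
theorem boltzmann_phase_space_transform
    (d L : ℕ) (hd : 1 ≤ d) (hL : 1 ≤ L)
    (Z : Type*) [Nonempty Z]
    (a : Fin L → Z → ℝ) (ha : ∀ i z, 0 < a i z)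
    (b : Fin L → (Fin d → ℝ) → ℝ) (hb : ∀ i, ContDiff ℝ (⊤ : ℕ∞) (b i))
    (Vset : Set (Fin d → ℝ)) (hVmeas : MeasurableSet Vset)
    (hVbdd : Bornology.IsBounded Vset)
    (Ω : ℝ) (hΩ : Ω = (volume Vset).toReal) (hΩpos : 0 < Ω)
    (f : ℝ → (Fin d → ℝ) → (Fin d → ℝ) → Z → ℝ)
    (hf_smooth : ∀ v z, ContDiff ℝ (⊤ : ℕ∞) (fun tx : ℝ × (Fin d → ℝ) => f tx.1 tx.2 v z))
    (hf_contv : ∀ t x z, Continuous (fun v => f t x v z))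
    (hf_int : ∀ t x z, IntegrableOn (fun v => f t x v z) Vset)
    (hBoltz : ∀ t x z, ∀ v ∈ Vset,
      deriv (fun s => f s x v z) t + ∑ j, v j * pd j (fun y => f t y v z) x
        = (∑ i, a i z * b i x)
            * ((1 / Ω) * (∫ v' in Vset, f t x v' z) - f t x v z))
    (F' : ℝ → (Fin d → ℝ) → (Fin d → ℝ) → Z → (Fin L → ℝ) → ℝ)
    (hF' : ∀ t x v z p, F' t x v z p
      = (∏ i, a i z / 2 * Real.exp (-(a i z) * |p i|)) * f t x v z) :
    ∀ t x z, ∀ v ∈ Vset, ∀ p : Fin L → ℝ, (∀ i, p i ≠ 0) →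
      deriv (fun s => F' s x v z p) t + ∑ j, v j * pd j (fun y => F' t y v z p) x
        = -∑ i, Real.sign (p i) * b i x
            * ((1 / Ω) * (∫ v' in Vset, pd i (fun q => F' t x v' z q) p)
                - pd i (fun q => F' t x v z q) p) := by
  intro t x z v hv p hp
  set C : ℝ := ∏ i, a i z / 2 * Real.exp (-(a i z) * |p i|) with hC
  -- time derivative
  have hdt : deriv (fun s => F' s x v z p) t = C * deriv (fun s => f s x v z) t := by
    have h1 : (fun s => F' s x v z p) = fun s => C * f s x v z := by
      funext s; rw [hF']
    have hdiff : DifferentiableAt ℝ (fun s => f s x v z) t := by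
      have := ((hf_smooth v z).differentiable (by simp)).comp
        ((differentiable_id : Differentiable ℝ (fun s : ℝ => s)).prodMk
          (differentiable_const x))
      exact this t
    rw [h1, deriv_const_mul _ hdiff]
  -- spatial derivatives
  have hdx : ∀ j, pd j (fun y => F' t y v z p) x = C * pd j (fun y => f t y v z) x := by
    intro j
    unfold pd
    have h1 : (fun s => F' t (Function.update x j s) v z p)
        = fun s => C * f t (Function.update x j s) v z := by
      funext s; rw [hF']
    have hdiff : DifferentiableAt ℝ (fun s => f t (Function.update x j s) v z) (x j) := by
      have := ((hf_smooth v z).differentiable (by simp)).comp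
        ((differentiable_const t).prodMk (diff_update x j))
      exact this (x j)
    rw [h1, deriv_const_mul _ hdiff]
  -- p derivatives
  have hpd : ∀ (i : Fin L) (w : Fin d → ℝ),
      pd i (fun q => F' t x w z q) p = -(a i z) * Real.sign (p i) * C * f t x w z := by
    intro i w
    unfold pd
    have hCsplit : C = (a i z / 2 * Real.exp (-(a i z) * |p i|))
        * ∏ k ∈ Finset.univ.erase i, a k z / 2 * Real.exp (-(a k z) * |p k|) :=
      (Finset.mul_prod_erase _ _ (Finset.mem_univ i)).symm
    have h1 : (fun s => F' t x w z (Function.update p i s))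
        = fun s => (a i z / 2 * Real.exp (-(a i z) * |s|))
            * ((∏ k ∈ Finset.univ.erase i,
                a k z / 2 * Real.exp (-(a k z) * |p k|)) * f t x w z) := by
      funext s
      rw [hF']
      rw [← Finset.mul_prod_erase Finset.univ _ (Finset.mem_univ i),
        Function.update_self, mul_assoc]
      congr 2
      refine Finset.prod_congr rfl fun k hk => ?_
      rw [Function.update_of_ne (Finset.ne_of_mem_erase hk)]
    have hφ : HasDerivAt
        (fun s => (a i z / 2 * Real.exp (-(a i z) * |s|))
          * ((∏ k ∈ Finset.univ.erase i,
              a k z / 2 * Real.exp (-(a k z) * |p k|)) * f t x w z))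
        ((a i z / 2 * (Real.exp (-(a i z) * |p i|) * (-(a i z) * Real.sign (p i))))
          * ((∏ k ∈ Finset.univ.erase i,
              a k z / 2 * Real.exp (-(a k z) * |p k|)) * f t x w z)) (p i) := by
      have h2 : HasDerivAt (fun s : ℝ => -(a i z) * |s|) (-(a i z) * Real.sign (p i)) (p i) :=
        (hasDerivAt_abs' (hp i)).const_mul _
      exact ((h2.exp).const_mul (a i z / 2)).mul_const _
    rw [h1, hφ.deriv, hCsplit]
    ring
  have hsgn : ∀ i : Fin L, Real.sign (p i) = 1 ∨ Real.sign (p i) = -1 := by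
    intro i
    rcases (hp i).lt_or_gt with h | h
    · exact Or.inr (Real.sign_of_neg h)
    · exact Or.inl (Real.sign_of_pos h)
  -- assemble LHS
  have hLHS : deriv (fun s => F' s x v z p) t + ∑ j, v j * pd j (fun y => F' t y v z p) x
      = C * ((∑ i, a i z * b i x)
          * ((1 / Ω) * (∫ v' in Vset, f t x v' z) - f t x v z)) := by
    rw [hdt, ← hBoltz t x z v hv, mul_add, Finset.mul_sum]
    congr 1
    refine Finset.sum_congr rfl fun j _ => ?_
    rw [hdx j]; ring
  rw [hLHS]
  simp_rw [hpd, integral_const_mul]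
  rw [show (∑ i, Real.sign (p i) * b i x
      * ((1 / Ω) * (-(a i z) * Real.sign (p i) * C * ∫ v' in Vset, f t x v' z)
          - -(a i z) * Real.sign (p i) * C * f t x v z))
    = ∑ i, -(a i z * b i x
        * ((1 / Ω) * (∫ v' in Vset, f t x v' z) - f t x v z) * C) from
    Finset.sum_congr rfl fun i _ => by
      rcases hsgn i with h | h <;> rw [h] <;> ring]
  rw [Finset.sum_neg_distrib, neg_neg, ← Finset.sum_mul, ← Finset.sum_mul]
  ring
end
end

section
/- Suppose F′ : ℝ × ℝ^d × V × ℝ^L → ℝ is continuously differentiable, there is a compact set K ⊂ ℝ^d such that F′(t,x,v,p) = 0 whenever x ∉ K (vanishing boundary condition), and F′ solves the phase-space linear Boltzmann equation ∂_t F′ + v·∇_x F′ = − Σ_{i=1}^L sign(p_i) b_i(x) [ (1/Ω) ∫_V ∂_{p_i} F′(t,x,v′,p) dv′ − ∂_{p_i} F′(t,x,v,p) ] for all t, x, v and all p with p_i ≠ 0 for every i. Then for every such p the total mass is conserved: the map t ↦ ∫_{ℝ^d} ∫_V F′(t,x,v,p) dv dx is constant. -/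
open Real MeasureTheory Metric

noncomputable section

theorem pd_eq_fderiv' {ι : Type*} [DecidableEq ι] [Fintype ι] {E : Type*} [NormedAddCommGroup E]
    [NormedSpace ℝ E] (i : ι) (f : (ι → ℝ) → E) (x : ι → ℝ)
    (hf : DifferentiableAt ℝ f x) : pd i f x = fderiv ℝ f x (Pi.single i 1) := by
  have hu : HasDerivAt (Function.update x i) (Pi.single i (1:ℝ)) (x i) := hasDerivAt_update x i (x i)
  have hfx : HasFDerivAt f (fderiv ℝ f x) (Function.update x i (x i)) := by
    rw [Function.update_eq_self]; exact hf.hasFDerivAt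
  exact (hfx.comp_hasDerivAt (x i) hu).deriv

theorem fderiv_eq_zero_of_zero_on_open {E F : Type*} [NormedAddCommGroup E] [NormedSpace ℝ E]
    [NormedAddCommGroup F] [NormedSpace ℝ F] {f : E → F} {x : E} {U : Set E} (hU : IsOpen U)
    (hx : x ∈ U) (h : ∀ y ∈ U, f y = 0) : fderiv ℝ f x = 0 := by
  have hev : f =ᶠ[nhds x] (fun _ => 0) :=
    Filter.eventually_iff_exists_mem.2 ⟨U, hU.mem_nhds hx, h⟩
  rw [hev.fderiv_eq, fderiv_fun_const]; rfl

theorem integral_fderiv_zero {d : ℕ} (f : (Fin d → ℝ) → ℝ) (hf : ContDiff ℝ 1 f)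
    (K : Set (Fin d → ℝ)) (hK : IsCompact K) (h0 : ∀ x, x ∉ K → f x = 0)
    (w : Fin d → ℝ) : ∫ x : Fin d → ℝ, fderiv ℝ f x w = 0 := by
  have hdiff := hf.differentiable one_ne_zero
  have hcf : Continuous (fderiv ℝ f) := hf.continuous_fderiv one_ne_zero
  have hφconst : ∀ s : ℝ, (∫ x : Fin d → ℝ, f (x + s • w)) = ∫ x, f x := fun s =>
    integral_add_right_eq_self f (s • w)
  have hK'c : IsCompact (cthickening ‖w‖ K) := hK.cthickening
  obtain ⟨C, hCb⟩ := (hK'c.image hcf.norm).bddAbove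
  set C' := max C 0 with hC'
  have hC0 : ∀ y ∈ cthickening ‖w‖ K, ‖fderiv ℝ f y‖ ≤ C' :=
    fun y hy => le_trans (hCb ⟨y, hy, rfl⟩) (le_max_left _ _)
  set bound : (Fin d → ℝ) → ℝ := fun x => (C' * ‖w‖) * (cthickening ‖w‖ K).indicator 1 x
    with hbdef
  have hb_int : Integrable bound := by
    apply Integrable.const_mul
    rw [integrable_indicator_iff hK'c.measurableSet]
    exact integrableOn_const hK'c.measure_lt_top.ne
  have hder : ∀ (s : ℝ) (x : Fin d → ℝ),
      HasDerivAt (fun s : ℝ => f (x + s • w)) (fderiv ℝ f (x + s • w) w) s := by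
    intro s x
    have h1 : HasDerivAt (fun s : ℝ => x + s • w) w s := by
      simpa using ((hasDerivAt_id s).smul_const w).const_add x
    exact (hdiff (x + s • w)).hasFDerivAt.comp_hasDerivAt s h1
  have hKsub : K ⊆ cthickening ‖w‖ K := self_subset_cthickening K
  have hbd : ∀ (x : Fin d → ℝ), ∀ s ∈ ball (0:ℝ) 1,
      ‖fderiv ℝ f (x + s • w) w‖ ≤ bound x := by
    intro x s hs
    by_cases hx : x + s • w ∈ K
    · have hxK' : x ∈ cthickening ‖w‖ K := by
        apply mem_cthickening_of_dist_le x (x + s • w) _ _ hx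
        rw [dist_eq_norm, show x - (x + s • w) = -(s • w) by ring, norm_neg, norm_smul]
        calc ‖s‖ * ‖w‖ ≤ 1 * ‖w‖ := by
              apply mul_le_mul_of_nonneg_right _ (norm_nonneg w)
              rw [mem_ball, dist_zero_right] at hs; exact le_of_lt hs
          _ = ‖w‖ := one_mul _
      calc ‖fderiv ℝ f (x + s • w) w‖ ≤ ‖fderiv ℝ f (x + s • w)‖ * ‖w‖ :=
            (fderiv ℝ f (x + s • w)).le_opNorm w
        _ ≤ C' * ‖w‖ := mul_le_mul_of_nonneg_right (hC0 _ (hKsub hx)) (norm_nonneg w)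
        _ = bound x := by rw [hbdef]; simp [Set.indicator_of_mem hxK']
    · have : fderiv ℝ f (x + s • w) = 0 :=
        fderiv_eq_zero_of_zero_on_open hK.isClosed.isOpen_compl hx (fun y hy => h0 y hy)
      rw [this]
      simp only [ContinuousLinearMap.zero_apply, norm_zero, hbdef]
      apply mul_nonneg (mul_nonneg (le_max_right C 0) (norm_nonneg w))
      exact Set.indicator_nonneg (fun _ _ => zero_le_one) x
  have hf_int : ∀ s : ℝ, Integrable (fun x : Fin d → ℝ => f (x + s • w)) := by
    intro s
    have h1 : Integrable f := by
      apply Continuous.integrable_of_hasCompactSupport hf.continuous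
      apply HasCompactSupport.of_support_subset_isCompact hK
      intro x hx
      by_contra hxK
      exact hx (h0 x hxK)
    exact h1.comp_add_right (s • w)
  have key := hasDerivAt_integral_of_dominated_loc_of_deriv_le (ball_mem_nhds (0:ℝ) one_pos)
    (F := fun s (x : Fin d → ℝ) => f (x + s • w))
    (F' := fun s (x : Fin d → ℝ) => fderiv ℝ f (x + s • w) w)
    (x₀ := (0:ℝ)) (bound := bound)
    (Filter.Eventually.of_forall fun s => (hf_int s).aestronglyMeasurable)
    (hf_int 0)
    (by
      apply Continuous.aestronglyMeasurable
      have : Continuous fun x : Fin d → ℝ => fderiv ℝ f (x + (0:ℝ) • w) :=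
        hcf.comp (by continuity)
      exact (ContinuousLinearMap.apply ℝ ℝ w).continuous.comp this)
    (Filter.Eventually.of_forall fun x => hbd x)
    hb_int
    (Filter.Eventually.of_forall fun x s _ => hder s x)
  have hφ : HasDerivAt (fun s : ℝ => ∫ x : Fin d → ℝ, f (x + s • w))
      (∫ x : Fin d → ℝ, fderiv ℝ f (x + (0:ℝ) • w) w) 0 := key.2
  have hφ' : HasDerivAt (fun s : ℝ => ∫ x : Fin d → ℝ, f (x + s • w)) 0 0 := by
    have : (fun s : ℝ => ∫ x : Fin d → ℝ, f (x + s • w)) = fun _ => ∫ x, f x := by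
      funext s; exact hφconst s
    rw [this]; exact hasDerivAt_const 0 _
  have := hφ.unique hφ'
  simpa using this

theorem integrable_prod_of_compact_fst {d : ℕ} {K Vset : Set (Fin d → ℝ)}
    (hK : IsCompact K) (hVmeas : MeasurableSet Vset) (hVbdd : Bornology.IsBounded Vset)
    (h : (Fin d → ℝ) × (Fin d → ℝ) → ℝ) (hc : Continuous h)
    (h0 : ∀ z, z.1 ∉ K → h z = 0) :
    Integrable h ((volume : Measure (Fin d → ℝ)).prod
      ((volume : Measure (Fin d → ℝ)).restrict Vset)) := by
  set ν := (volume : Measure (Fin d → ℝ)).restrict Vset with hν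
  have hνfin : IsFiniteMeasure ν := ⟨by
    rw [hν, Measure.restrict_apply_univ]; exact hVbdd.measure_lt_top⟩
  have hVclc : IsCompact (closure Vset) :=
    Metric.isCompact_of_isClosed_isBounded isClosed_closure hVbdd.closure
  have hS : IsCompact (K ×ˢ closure Vset) := hK.prod hVclc
  obtain ⟨C, hCb⟩ := (hS.image hc.norm).bddAbove
  have hC : ∀ z ∈ K ×ˢ closure Vset, ‖h z‖ ≤ max C 0 :=
    fun z hz => le_trans (hCb ⟨z, hz, rfl⟩) (le_max_left _ _)
  have hae : ∀ᵐ z ∂(volume : Measure (Fin d → ℝ)).prod ν, z.2 ∈ Vset := by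
    rw [Filter.eventually_iff, mem_ae_iff]
    have hset : {z : (Fin d → ℝ) × (Fin d → ℝ) | z.2 ∈ Vset}ᶜ = Set.univ ×ˢ Vsetᶜ := by
      ext z; simp [Set.mem_prod]
    rw [hset, Measure.prod_prod, hν, Measure.restrict_apply hVmeas.compl]
    simp
  have hμKuniv : ((volume : Measure (Fin d → ℝ)).prod ν) (K ×ˢ Set.univ) < ⊤ := by
    rw [Measure.prod_prod]
    exact ENNReal.mul_lt_top hK.measure_lt_top (measure_lt_top ν _)
  apply Integrable.mono' (g := fun z => (max C 0) * (K ×ˢ (Set.univ : Set (Fin d → ℝ))).indicator 1 z)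
  · apply Integrable.const_mul
    rw [integrable_indicator_iff (hK.measurableSet.prod MeasurableSet.univ)]
    exact integrableOn_const hμKuniv.ne
  · exact hc.aestronglyMeasurable
  · filter_upwards [hae] with z hz
    by_cases hzK : z.1 ∈ K
    · have hmem : z ∈ K ×ˢ closure Vset := Set.mk_mem_prod hzK (subset_closure hz)
      calc ‖h z‖ ≤ max C 0 := hC z hmem
        _ = (max C 0) * (K ×ˢ (Set.univ : Set (Fin d → ℝ))).indicator 1 z := by
            rw [Set.indicator_of_mem (Set.mk_mem_prod hzK (Set.mem_univ _))]; simp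
    · rw [h0 z hzK]
      simp only [norm_zero]
      apply mul_nonneg (le_max_right C 0)
      exact Set.indicator_nonneg (fun _ _ => zero_le_one) z

set_option maxHeartbeats 2000000 in
/-- mass conservation for the phase-space linear Boltzmann equation.
If `F'` is `C¹`, vanishes for `x` outside a compact set `K`, and solves
`∂ₜF' + v·∇ₓF' = -∑ i sign(pᵢ) bᵢ(x) [(1/Ω) ∫_V ∂_{pᵢ}F' dv' - ∂_{pᵢ}F']`
for all `t, x`, all `v` in the velocity domain and all `p` with every `pᵢ ≠ 0`,
then for every such `p` the total mass `t ↦ ∫_{ℝ^d} ∫_V F'(t,x,v,p) dv dx` is constant. -/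
theorem boltzmann_phase_space_mass_conservation
    (d L : ℕ) (hd : 1 ≤ d) (hL : 1 ≤ L)
    (b : Fin L → (Fin d → ℝ) → ℝ) (hb : ∀ i, Continuous (b i))
    (Vset : Set (Fin d → ℝ)) (hVmeas : MeasurableSet Vset)
    (hVbdd : Bornology.IsBounded Vset)
    (Ω : ℝ) (hΩ : Ω = (volume Vset).toReal) (hΩpos : 0 < Ω)
    (F' : ℝ → (Fin d → ℝ) → (Fin d → ℝ) → (Fin L → ℝ) → ℝ)
    (hF'C1 : ContDiff ℝ 1
      (fun w : ℝ × (Fin d → ℝ) × (Fin d → ℝ) × (Fin L → ℝ) => F' w.1 w.2.1 w.2.2.1 w.2.2.2))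
    (K : Set (Fin d → ℝ)) (hK : IsCompact K)
    (hsupp : ∀ t x v p, x ∉ K → F' t x v p = 0)
    (hPDE : ∀ t x, ∀ v ∈ Vset, ∀ p : Fin L → ℝ, (∀ i, p i ≠ 0) →
      deriv (fun s => F' s x v p) t + ∑ j, v j * pd j (fun y => F' t y v p) x
        = -∑ i, Real.sign (p i) * b i x
            * ((1 / Ω) * (∫ v' in Vset, pd i (fun q => F' t x v' q) p)
                - pd i (fun q => F' t x v q) p)) :
    ∀ p : Fin L → ℝ, (∀ i, p i ≠ 0) → ∀ t₁ t₂ : ℝ,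
      (∫ x : Fin d → ℝ, ∫ v in Vset, F' t₁ x v p)
        = ∫ x : Fin d → ℝ, ∫ v in Vset, F' t₂ x v p := by
  intro p hp t₁ t₂
  set G : ℝ × (Fin d → ℝ) × (Fin d → ℝ) × (Fin L → ℝ) → ℝ :=
    fun w => F' w.1 w.2.1 w.2.2.1 w.2.2.2 with hGdef
  have hGdiff : Differentiable ℝ G := hF'C1.differentiable one_ne_zero
  have hGc : Continuous G := hF'C1.continuous
  have hfc : Continuous (fderiv ℝ G) := hF'C1.continuous_fderiv one_ne_zero
  have hGzero : ∀ w : ℝ × (Fin d → ℝ) × (Fin d → ℝ) × (Fin L → ℝ),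
      w.2.1 ∉ K → fderiv ℝ G w = 0 := by
    intro w hw
    apply fderiv_eq_zero_of_zero_on_open (U := (fun w : ℝ × (Fin d → ℝ) × (Fin d → ℝ) ×
      (Fin L → ℝ) => w.2.1) ⁻¹' Kᶜ)
      (hK.isClosed.isOpen_compl.preimage (continuous_fst.comp continuous_snd)) hw
    intro y hy
    exact hsupp y.1 y.2.1 y.2.2.1 y.2.2.2 hy
  -- time derivative of slices
  have hDt : ∀ (t : ℝ) (x v : Fin d → ℝ) (q : Fin L → ℝ),
      HasDerivAt (fun s => F' s x v q)
        (fderiv ℝ G (t, x, v, q) (1, 0, 0, 0)) t := by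
    intro t x v q
    have hcurve : HasDerivAt (fun s : ℝ => (s, x, v, q))
        ((1 : ℝ), (0 : Fin d → ℝ), (0 : Fin d → ℝ), (0 : Fin L → ℝ)) t :=
      (hasDerivAt_id t).prodMk ((hasDerivAt_const t x).prodMk
        ((hasDerivAt_const t v).prodMk (hasDerivAt_const t q)))
    exact (hGdiff (t, x, v, q)).hasFDerivAt.comp_hasDerivAt t hcurve
  -- x-partial derivatives of slices
  have hDx : ∀ (t : ℝ) (x v : Fin d → ℝ) (q : Fin L → ℝ) (j : Fin d),
      pd j (fun y => F' t y v q) x = fderiv ℝ G (t, x, v, q) (0, Pi.single j 1, 0, 0) := by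
    intro t x v q j
    have hcurve : HasDerivAt (fun s : ℝ => (t, Function.update x j s, v, q))
        ((0 : ℝ), Pi.single j (1:ℝ), (0 : Fin d → ℝ), (0 : Fin L → ℝ)) (x j) :=
      (hasDerivAt_const (x j) t).prodMk ((hasDerivAt_update x j (x j)).prodMk
        ((hasDerivAt_const (x j) v).prodMk (hasDerivAt_const (x j) q)))
    have hfd : HasFDerivAt G (fderiv ℝ G (t, x, v, q)) (t, Function.update x j (x j), v, q) := by
      rw [Function.update_eq_self]; exact (hGdiff _).hasFDerivAt
    exact (hfd.comp_hasDerivAt (x j) hcurve).deriv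
  -- p-partial derivatives of slices
  have hDp : ∀ (t : ℝ) (x v : Fin d → ℝ) (i : Fin L),
      pd i (fun q => F' t x v q) p = fderiv ℝ G (t, x, v, p) (0, 0, 0, Pi.single i 1) := by
    intro t x v i
    have hcurve : HasDerivAt (fun s : ℝ => (t, x, v, Function.update p i s))
        ((0 : ℝ), (0 : Fin d → ℝ), (0 : Fin d → ℝ), Pi.single i (1:ℝ)) (p i) :=
      (hasDerivAt_const (p i) t).prodMk ((hasDerivAt_const (p i) x).prodMk
        ((hasDerivAt_const (p i) v).prodMk (hasDerivAt_update p i (p i))))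
    have hfd : HasFDerivAt G (fderiv ℝ G (t, x, v, p)) (t, x, v, Function.update p i (p i)) := by
      rw [Function.update_eq_self]; exact (hGdiff _).hasFDerivAt
    exact (hfd.comp_hasDerivAt (p i) hcurve).deriv
  -- measure setup
  set ν := (volume : Measure (Fin d → ℝ)).restrict Vset with hν
  have hνfin : IsFiniteMeasure ν := ⟨by
    rw [hν, Measure.restrict_apply_univ]; exact hVbdd.measure_lt_top⟩
  set μ := (volume : Measure (Fin d → ℝ)).prod ν with hμ
  have hae : ∀ᵐ z ∂μ, z.2 ∈ Vset := by
    rw [Filter.eventually_iff, mem_ae_iff]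
    have hset : {z : (Fin d → ℝ) × (Fin d → ℝ) | z.2 ∈ Vset}ᶜ = Set.univ ×ˢ Vsetᶜ := by
      ext z; simp [Set.mem_prod]
    rw [hset, hμ, Measure.prod_prod, hν, Measure.restrict_apply hVmeas.compl]
    simp
  have hint : ∀ h : (Fin d → ℝ) × (Fin d → ℝ) → ℝ, Continuous h →
      (∀ z, z.1 ∉ K → h z = 0) → Integrable h μ := fun h hc h0 =>
    integrable_prod_of_compact_fst hK hVmeas hVbdd h hc h0
  have hembc : ∀ t : ℝ, Continuous (fun z : (Fin d → ℝ) × (Fin d → ℝ) =>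
      (t, z.1, z.2, p)) := fun t => continuous_const.prodMk
    (continuous_fst.prodMk (continuous_snd.prodMk continuous_const))
  have hg_int : ∀ t, Integrable (fun z : (Fin d → ℝ) × (Fin d → ℝ) => F' t z.1 z.2 p) μ := by
    intro t
    exact hint _ (hGc.comp (hembc t)) (fun z hz => hsupp t z.1 z.2 p hz)
  set M : ℝ → ℝ := fun t => ∫ z, F' t z.1 z.2 p ∂μ with hM
  have hMeq : ∀ t, M t = ∫ x, ∫ v in Vset, F' t x v p :=
    fun t => integral_prod _ (hg_int t)
  -- the time derivative integrand
  set DT : ℝ → (Fin d → ℝ) × (Fin d → ℝ) → ℝ := fun s z =>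
    fderiv ℝ G (s, z.1, z.2, p) ((1 : ℝ), (0 : Fin d → ℝ), (0 : Fin d → ℝ), (0 : Fin L → ℝ))
    with hDT
  have hDTc : ∀ s, Continuous (DT s) := by
    intro s
    apply (ContinuousLinearMap.apply ℝ ℝ _).continuous.comp
    exact hfc.comp (hembc s)
  have hVclc : IsCompact (closure Vset) :=
    Metric.isCompact_of_isClosed_isBounded isClosed_closure hVbdd.closure
  have hnorm1 : ‖((1 : ℝ), (0 : Fin d → ℝ), (0 : Fin d → ℝ), (0 : Fin L → ℝ))‖ = 1 := by
    simp [Prod.norm_def]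
  have hDT0 : ∀ s z, z.1 ∉ K → DT s z = 0 := by
    intro s z hz
    simp only [hDT]
    rw [hGzero (s, z.1, z.2, p) hz]
    rfl
  -- derivative of M
  have hMder : ∀ t₀ : ℝ, Integrable (DT t₀) μ ∧ HasDerivAt M (∫ z, DT t₀ z ∂μ) t₀ := by
    intro t₀
    have hSc : IsCompact ((Set.Icc (t₀ - 1) (t₀ + 1)) ×ˢ (K ×ˢ closure Vset)) :=
      isCompact_Icc.prod (hK.prod hVclc)
    have hφc : Continuous (fun sz : ℝ × ((Fin d → ℝ) × (Fin d → ℝ)) =>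
        fderiv ℝ G (sz.1, sz.2.1, sz.2.2, p)) := by
      apply hfc.comp
      exact continuous_fst.prodMk ((continuous_fst.comp continuous_snd).prodMk
        (((continuous_snd.comp continuous_snd)).prodMk continuous_const))
    obtain ⟨C, hCb⟩ := (hSc.image hφc.norm).bddAbove
    have hC : ∀ sz ∈ (Set.Icc (t₀ - 1) (t₀ + 1)) ×ˢ (K ×ˢ closure Vset),
        ‖fderiv ℝ G (sz.1, sz.2.1, sz.2.2, p)‖ ≤ max C 0 :=
      fun sz hsz => le_trans (hCb ⟨sz, hsz, rfl⟩) (le_max_left _ _)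
    set bound : (Fin d → ℝ) × (Fin d → ℝ) → ℝ := fun z =>
      (max C 0) * (K ×ˢ (Set.univ : Set (Fin d → ℝ))).indicator 1 z with hbdef
    have hb_int : Integrable bound μ := by
      apply Integrable.const_mul
      rw [integrable_indicator_iff (hK.measurableSet.prod MeasurableSet.univ)]
      refine integrableOn_const (ne_of_lt ?_)
      rw [hμ, Measure.prod_prod]
      exact ENNReal.mul_lt_top hK.measure_lt_top (measure_lt_top ν _)
    have key := hasDerivAt_integral_of_dominated_loc_of_deriv_le (ball_mem_nhds t₀ one_pos)
      (F := fun s (z : (Fin d → ℝ) × (Fin d → ℝ)) => F' s z.1 z.2 p)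
      (F' := DT) (x₀ := t₀) (bound := bound) (μ := μ)
      (Filter.Eventually.of_forall fun s =>
        ((hGc.comp (hembc s)).aestronglyMeasurable))
      (hg_int t₀)
      ((hDTc t₀).aestronglyMeasurable)
      (by
        filter_upwards [hae] with z hz
        intro s hs
        by_cases hzK : z.1 ∈ K
        · have hs' : s ∈ Set.Icc (t₀ - 1) (t₀ + 1) := by
            rw [mem_ball, Real.dist_eq] at hs
            have := abs_lt.1 hs
            constructor <;> linarith
          have hmem : (s, z) ∈ (Set.Icc (t₀ - 1) (t₀ + 1)) ×ˢ (K ×ˢ closure Vset) :=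
            Set.mk_mem_prod hs' (Set.mk_mem_prod hzK (subset_closure hz))
          calc ‖DT s z‖ ≤ ‖fderiv ℝ G (s, z.1, z.2, p)‖ *
                ‖((1 : ℝ), (0 : Fin d → ℝ), (0 : Fin d → ℝ), (0 : Fin L → ℝ))‖ :=
                (fderiv ℝ G (s, z.1, z.2, p)).le_opNorm _
            _ = ‖fderiv ℝ G (s, z.1, z.2, p)‖ := by rw [hnorm1, mul_one]
            _ ≤ max C 0 := hC (s, z) hmem
            _ = bound z := by
                simp only [hbdef]
                rw [Set.indicator_of_mem (Set.mk_mem_prod hzK (Set.mem_univ z.2))]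
                simp
        · rw [hDT0 s z hzK]
          simp only [norm_zero, hbdef]
          apply mul_nonneg (le_max_right C 0)
          exact Set.indicator_nonneg (fun _ _ => zero_le_one) z)
      hb_int
      (Filter.Eventually.of_forall fun z s _ => hDt s z.1 z.2 p)
    exact key
  -- the derivative integral vanishes
  have hZero : ∀ t : ℝ, ∫ z, DT t z ∂μ = 0 := by
    intro t
    haveI : IsFiniteMeasure ν := hνfin
    -- the transport term
    set A : (Fin d → ℝ) × (Fin d → ℝ) → ℝ := fun z =>
      ∑ j, -(z.2 j * fderiv ℝ G (t, z.1, z.2, p) (0, Pi.single j 1, 0, 0)) with hA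
    have htermc : ∀ j : Fin d, Continuous (fun z : (Fin d → ℝ) × (Fin d → ℝ) =>
        -(z.2 j * fderiv ℝ G (t, z.1, z.2, p) (0, Pi.single j 1, 0, 0))) := by
      intro j
      exact (((continuous_apply j).comp continuous_snd).mul
        ((ContinuousLinearMap.apply ℝ ℝ _).continuous.comp (hfc.comp (hembc t)))).neg
    have hterm0 : ∀ (j : Fin d) (z : (Fin d → ℝ) × (Fin d → ℝ)), z.1 ∉ K →
        -(z.2 j * fderiv ℝ G (t, z.1, z.2, p) (0, Pi.single j 1, 0, 0)) = 0 := by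
      intro j z hz
      rw [hGzero (t, z.1, z.2, p) hz]
      simp
    have hterm_int : ∀ j : Fin d, Integrable (fun z : (Fin d → ℝ) × (Fin d → ℝ) =>
        -(z.2 j * fderiv ℝ G (t, z.1, z.2, p) (0, Pi.single j 1, 0, 0))) μ :=
      fun j => hint _ (htermc j) (hterm0 j)
    have hA_cont : Continuous A := by
      rw [hA]; exact continuous_finset_sum _ (fun j _ => htermc j)
    have hA0 : ∀ z, z.1 ∉ K → A z = 0 := by
      intro z hz
      simp only [hA]
      exact Finset.sum_eq_zero (fun j _ => hterm0 j z hz)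
    have hA_int : Integrable A μ := hint A hA_cont hA0
    -- ∫ A = 0
    have hxint : ∀ (v : Fin d → ℝ) (j : Fin d),
        (∫ x : Fin d → ℝ, fderiv ℝ G (t, x, v, p) (0, Pi.single j 1, 0, 0)) = 0 := by
      intro v j
      have hsliceC1 : ContDiff ℝ 1 (fun y : Fin d → ℝ => F' t y v p) :=
        hF'C1.comp (contDiff_const.prodMk (contDiff_id.prodMk
          (contDiff_const.prodMk contDiff_const)))
      have h1 := integral_fderiv_zero _ hsliceC1 K hK
        (fun x hx => hsupp t x v p hx) (Pi.single j 1)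
      have heq : (fun x => fderiv ℝ (fun y : Fin d → ℝ => F' t y v p) x (Pi.single j 1))
          = fun x => fderiv ℝ G (t, x, v, p) (0, Pi.single j 1, 0, 0) := by
        funext x
        rw [← pd_eq_fderiv' j _ x ((hsliceC1.differentiable one_ne_zero) x), hDx]
      rw [heq] at h1
      exact h1
    have hAzero : (∫ z, A z ∂μ) = 0 := by
      have h1 : (∫ z, A z ∂μ) = ∑ j, ∫ z, -((z.2 : Fin d → ℝ) j *
          fderiv ℝ G (t, z.1, z.2, p) (0, Pi.single j 1, 0, 0)) ∂μ := by
        rw [hA]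
        exact integral_finset_sum _ (fun j _ => hterm_int j)
      rw [h1]
      apply Finset.sum_eq_zero
      intro j _
      rw [integral_neg, neg_eq_zero]
      have h2 := integral_prod_symm (fun z : (Fin d → ℝ) × (Fin d → ℝ) =>
          (z.2 : Fin d → ℝ) j * fderiv ℝ G (t, z.1, z.2, p) (0, Pi.single j 1, 0, 0))
        (((hterm_int j).neg).congr (Filter.Eventually.of_forall (fun z => neg_neg _)))
      rw [h2]
      have h3 : ∀ v : Fin d → ℝ, (∫ x : Fin d → ℝ,
          v j * fderiv ℝ G (t, x, v, p) (0, Pi.single j 1, 0, 0)) = 0 := by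
        intro v
        rw [integral_const_mul, hxint v j, mul_zero]
      simp only [h3, integral_zero]
    -- the collision term
    set B : (Fin d → ℝ) × (Fin d → ℝ) → ℝ := fun z =>
      -∑ i, Real.sign (p i) * b i z.1
        * ((1 / Ω) * (∫ v' in Vset, pd i (fun q => F' t z.1 v' q) p)
            - pd i (fun q => F' t z.1 z.2 q) p) with hB
    have hDtAB : ∀ᵐ z ∂μ, DT t z = A z + B z := by
      filter_upwards [hae] with z hz
      have hpde := hPDE t z.1 z.2 hz p hp
      have hderiv : deriv (fun s => F' s z.1 z.2 p) t = DT t z := (hDt t z.1 z.2 p).deriv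
      have hAz : A z = -∑ j, z.2 j * pd j (fun y => F' t y z.2 p) z.1 := by
        simp only [hA, hDx, Finset.sum_neg_distrib]
      simp only [hB]
      rw [hderiv] at hpde
      rw [hAz]
      linarith [hpde]
    have hABint : Integrable (fun z => A z + B z) μ := ((hMder t).1).congr hDtAB
    have hB_int : Integrable B μ := by
      refine (hABint.sub hA_int).congr (Filter.Eventually.of_forall fun z => ?_)
      show A z + B z - A z = B z
      ring
    rw [integral_congr_ae hDtAB, integral_add hA_int hB_int, hAzero, zero_add]
    -- ∫ B = 0
    rw [integral_prod B hB_int]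
    have hinner : ∀ x : Fin d → ℝ, (∫ v, B (x, v) ∂ν) = 0 := by
      intro x
      have hhc : ∀ i : Fin L, Continuous (fun v : Fin d → ℝ =>
          fderiv ℝ G (t, x, v, p) (0, 0, 0, Pi.single i 1)) := by
        intro i
        apply (ContinuousLinearMap.apply ℝ ℝ _).continuous.comp
        exact hfc.comp (continuous_const.prodMk (continuous_const.prodMk
          (continuous_id.prodMk continuous_const)))
      have hhint : ∀ i : Fin L, Integrable (fun v : Fin d → ℝ =>
          pd i (fun q => F' t x v q) p) ν := by
        intro i
        have heq : (fun v : Fin d → ℝ => pd i (fun q => F' t x v q) p)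
            = fun v => fderiv ℝ G (t, x, v, p) (0, 0, 0, Pi.single i 1) :=
          funext fun v => hDp t x v i
        rw [hν, heq]
        exact (((hhc i).continuousOn).integrableOn_compact hVclc).mono_set subset_closure
      have hsummand : ∀ i : Fin L, (∫ v, Real.sign (p i) * b i x
          * ((1 / Ω) * (∫ v' in Vset, pd i (fun q => F' t x v' q) p)
              - pd i (fun q => F' t x v q) p) ∂ν) = 0 := by
        intro i
        rw [integral_const_mul]
        rw [integral_sub (integrable_const _) (hhint i)]
        rw [integral_const]
        have hmass : ν.real Set.univ = Ω := by
          rw [hν, measureReal_def, Measure.restrict_apply_univ, hΩ]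
        rw [hmass]
        have hIv : (∫ v, pd i (fun q => F' t x v q) p ∂ν)
            = ∫ v' in Vset, pd i (fun q => F' t x v' q) p := by rw [hν]
        rw [hIv]
        rw [smul_eq_mul]
        field_simp
        ring
      have hBint_v : (∫ v, B (x, v) ∂ν) = -∑ i, ∫ v, (Real.sign (p i) * b i x
          * ((1 / Ω) * (∫ v' in Vset, pd i (fun q => F' t x v' q) p)
              - pd i (fun q => F' t x v q) p)) ∂ν := by
        simp only [hB]
        rw [integral_neg, integral_finset_sum]
        intro i _
        exact (((integrable_const _).sub (hhint i)).const_mul _)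
      rw [hBint_v]
      simp only [hsummand]
      simp
    simp only [hinner, integral_zero]
  -- conclude
  have hM0 : ∀ t, HasDerivAt M 0 t := by
    intro t
    have := (hMder t).2
    rwa [hZero t] at this
  have hconst : M t₁ = M t₂ :=
    is_const_of_deriv_eq_zero (fun t => (hM0 t).differentiableAt)
      (fun t => (hM0 t).deriv) t₁ t₂
  rw [← hMeq t₁, ← hMeq t₂]
  exact hconst
end
end

section
/- Under the stated setup, for every t ∈ ℝ, x ∈ ℝ^d, z ∈ Z and every p ∈ ℝ^L: (i) U satisfies the third-order phase-space equation ∂_t U(t,x,z,p) + Σ_{i=1}^L b_i(x) Σ_{j=1}^d ∂_{x_j} ∂_{p_i} ∂_{p_i} U(t,x,z,p) = 0, whose coefficients are independent of z; and (ii) U satisfies the Robin relation ∂_{p_i} U(t,x,z,p) + √(a_i(z)) U(t,x,z,p) = 0 for every i, in particular on the boundary {p_i = 0}. -/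
open Real MeasureTheory

noncomputable section

lemma deriv_A_exp (A r : ℝ) :
    deriv (fun s => A * Real.exp (-r * s)) = fun s => -r * (A * Real.exp (-r * s)) := by
  funext s
  have h : HasDerivAt (fun s => A * Real.exp (-r * s)) (-r * (A * Real.exp (-r * s))) s := by
    have h0 := (((hasDerivAt_id s).const_mul (-r)).exp).const_mul A
    simp only [id_eq] at h0
    refine h0.congr_deriv ?_
    ring
  rw [h.deriv]

/-- the phase-space transform
`U(t,x,z,p) = (∏ i, √(aᵢ(z)) e^{-√(aᵢ(z)) pᵢ}) u(t,x,z)` of a solution of the linear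
advection equation with uncertain coefficient `a(x,z) = ∑ i, aᵢ(z) bᵢ(x)` satisfies
(i) the third-order phase-space equation
`∂ₜU + ∑ i bᵢ(x) ∑ⱼ ∂_{xⱼ}∂_{pᵢ}∂_{pᵢ} U = 0`, and
(ii) the Robin relation `∂_{pᵢ}U + √(aᵢ(z)) U = 0` for every `i`. -/
theorem advection_phase_space_transform
    (d L : ℕ) (hd : 1 ≤ d) (hL : 1 ≤ L)
    (Z : Type*) [Nonempty Z]
    (a : Fin L → Z → ℝ) (ha : ∀ i z, 0 < a i z)
    (b : Fin L → (Fin d → ℝ) → ℝ) (hb : ∀ i, ContDiff ℝ (⊤ : ℕ∞) (b i))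
    (u : ℝ → (Fin d → ℝ) → Z → ℝ)
    (hu : ∀ z, ContDiff ℝ (⊤ : ℕ∞) (fun tx : ℝ × (Fin d → ℝ) => u tx.1 tx.2 z))
    (hadv : ∀ t x z, deriv (fun s => u s x z) t
      + (∑ i, a i z * b i x) * (∑ j, pd j (fun y => u t y z) x) = 0)
    (U : ℝ → (Fin d → ℝ) → Z → (Fin L → ℝ) → ℝ)
    (hU : ∀ t x z p, U t x z p
      = (∏ i, Real.sqrt (a i z) * Real.exp (-Real.sqrt (a i z) * p i)) * u t x z) :
    (∀ t x z (p : Fin L → ℝ),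
      deriv (fun s => U s x z p) t
        + ∑ i, b i x * ∑ j, pd j (fun y => pd2 i (fun q => U t y z q) p) x = 0)
    ∧ (∀ t x z (p : Fin L → ℝ) (i : Fin L),
        pd i (fun q => U t x z q) p + Real.sqrt (a i z) * U t x z p = 0) := by
  -- notation
  set r : Fin L → Z → ℝ := fun i z => Real.sqrt (a i z) with hr
  have hr2 : ∀ i z, r i z * r i z = a i z := fun i z =>
    Real.mul_self_sqrt (ha i z).le
  -- the slice in the i-th p-coordinate is A * exp(-r s)
  have hslice : ∀ t x z (p : Fin L → ℝ) (i : Fin L),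
      (fun s => U t x z (Function.update p i s))
        = fun s => ((r i z * ∏ k ∈ Finset.univ.erase i,
            (r k z * Real.exp (-r k z * p k))) * u t x z) * Real.exp (-r i z * s) := by
    intro t x z p i
    funext s
    rw [hU]
    rw [← Finset.mul_prod_erase _ _ (Finset.mem_univ i)]
    have : ∀ k ∈ Finset.univ.erase i,
        Real.sqrt (a k z) * Real.exp (-Real.sqrt (a k z) * Function.update p i s k)
          = r k z * Real.exp (-r k z * p k) := by
      intro k hk
      rw [Function.update_of_ne (Finset.mem_erase.mp hk).1]
    rw [Finset.prod_congr rfl this, Function.update_self]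
    ring
  -- first p-derivative
  have hpd : ∀ t x z (p : Fin L → ℝ) (i : Fin L),
      pd i (fun q => U t x z q) p = -r i z * U t x z p := by
    intro t x z p i
    unfold pd
    rw [hslice t x z p i, deriv_A_exp]
    have h2 := congrFun (hslice t x z p i) (p i)
    simp only [Function.update_eq_self] at h2
    beta_reduce
    rw [h2]
  -- second p-derivative
  have hpd2 : ∀ t x z (p : Fin L → ℝ) (i : Fin L),
      pd2 i (fun q => U t x z q) p = a i z * U t x z p := by
    intro t x z p i
    unfold pd2
    rw [hslice t x z p i, deriv_A_exp]
    have : (fun s => -r i z * (((r i z * ∏ k ∈ Finset.univ.erase i,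
            (r k z * Real.exp (-r k z * p k))) * u t x z) * Real.exp (-r i z * s)))
        = fun s => (-r i z * ((r i z * ∏ k ∈ Finset.univ.erase i,
            (r k z * Real.exp (-r k z * p k))) * u t x z)) * Real.exp (-r i z * s) := by
      funext s; ring
    rw [this, deriv_A_exp]
    have h2 := congrFun (hslice t x z p i) (p i)
    simp only [Function.update_eq_self] at h2
    beta_reduce
    rw [h2, ← hr2 i z]
    ring
  constructor
  · intro t x z p
    -- rewrite each pd2 inside
    have hC : ∀ y, U t y z p
        = (∏ k, (r k z * Real.exp (-r k z * p k))) * u t y z := fun y => hU t y z p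
    have hterm : ∀ i : Fin L, ∀ j : Fin d,
        pd j (fun y => pd2 i (fun q => U t y z q) p) x
          = a i z * ((∏ k, (r k z * Real.exp (-r k z * p k))) * pd j (fun y => u t y z) x) := by
      intro i j
      have : (fun y => pd2 i (fun q => U t y z q) p)
          = fun y => (a i z * (∏ k, (r k z * Real.exp (-r k z * p k)))) * u t y z := by
        funext y
        rw [hpd2 t y z p i, hC y]; ring
      rw [this]
      unfold pd
      rw [deriv_const_mul_field]
      ring
    have hT : deriv (fun s => U s x z p) t
        = (∏ k, (r k z * Real.exp (-r k z * p k))) * deriv (fun s => u s x z) t := by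
      have : (fun s => U s x z p)
          = fun s => (∏ k, (r k z * Real.exp (-r k z * p k))) * u s x z := by
        funext s; exact hU s x z p
      rw [this, deriv_const_mul_field]
    simp only [hterm, hT]
    have := hadv t x z
    set C := ∏ k, (r k z * Real.exp (-r k z * p k))
    have expand : ∑ i, b i x * ∑ j, a i z * (C * pd j (fun y => u t y z) x)
        = C * ((∑ i, a i z * b i x) * (∑ j, pd j (fun y => u t y z) x)) := by
      rw [Finset.sum_mul]
      rw [Finset.mul_sum]
      refine Finset.sum_congr rfl fun i _ => ?_
      rw [Finset.mul_sum, Finset.mul_sum, Finset.mul_sum]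
      refine Finset.sum_congr rfl fun j _ => ?_
      ring
    rw [expand, ← mul_add]
    rw [show deriv (fun s => u s x z) t + (∑ i, a i z * b i x) * ∑ j, pd j (fun y => u t y z) x = 0 from hadv t x z]
    ring
  · intro t x z p i
    rw [hpd t x z p i]; ring
end
end

section
/- Under the stated setup, given samples z_1,…,z_M ∈ Z, define W(t,x,p,q) = (1/M) Σ_{m=1}^M [∏_{i=1}^L √(a_i(z_m)) e^{−√(a_i(z_m))(p_i+q_i)}] u(t,x,z_m) for p,q ∈ ℝ^L. Then: (i) W satisfies the third-order phase-space equation ∂_t W(t,x,p,q) + Σ_{i=1}^L b_i(x) Σ_{j=1}^d ∂_{x_j} ∂_{p_i} ∂_{p_i} W(t,x,p,q) = 0 for all (t,x,p,q); and (ii) ∂_{p_i} W(t,x,p,q) − ∂_{q_i} W(t,x,p,q) = 0 for every i and all (t,x,p,q), in particular on the boundary {p_i = 0}; so neither the equation nor the boundary condition depends on the samples z_m. -/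
open Real MeasureTheory

noncomputable section

noncomputable def Ef {L : ℕ} (c p q : Fin L → ℝ) : ℝ :=
  ∏ i, c i * Real.exp (-(c i) * (p i + q i))

lemma Ef_eq {L : ℕ} (c p q : Fin L → ℝ) :
    Ef c p q = (∏ i, c i) * Real.exp (∑ i, -(c i) * (p i + q i)) := by
  rw [Ef, Real.exp_sum, Finset.prod_mul_distrib]

lemma sum_update {L : ℕ} (v p w : Fin L → ℝ) (i : Fin L) (s : ℝ) :
    ∑ i', v i' * (Function.update p i s i' + w i')
      = (∑ i', v i' * (p i' + w i')) + v i * (s - p i) := by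
  have h : ∀ i' : Fin L, v i' * (Function.update p i s i' + w i')
      = v i' * (p i' + w i') + (if i' = i then v i * (s - p i) else 0) := by
    intro i'
    rcases eq_or_ne i' i with h | h
    · subst h; simp [Function.update_self]; ring
    · simp [Function.update_of_ne h, h]
  simp only [h, Finset.sum_add_distrib, Finset.sum_ite_eq' Finset.univ i,
    Finset.mem_univ, if_true]

lemma Ef_update_left {L : ℕ} (c p q : Fin L → ℝ) (i : Fin L) (s : ℝ) :
    Ef c (Function.update p i s) q
      = (Ef c p q * Real.exp (c i * p i)) * Real.exp (-(c i) * s) := by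
  rw [Ef_eq, Ef_eq, sum_update (fun i' => -(c i')) p q i s]
  have h : (∑ i', -(c i') * (p i' + q i')) + (-(c i)) * (s - p i)
      = (∑ i', -(c i') * (p i' + q i')) + (c i * p i + (-(c i)) * s) := by ring
  rw [h, Real.exp_add, Real.exp_add]
  ring

lemma Ef_update_right {L : ℕ} (c p q : Fin L → ℝ) (i : Fin L) (s : ℝ) :
    Ef c p (Function.update q i s)
      = (Ef c p q * Real.exp (c i * q i)) * Real.exp (-(c i) * s) := by
  rw [Ef_eq, Ef_eq]
  have h1 : ∀ i', -(c i') * (p i' + Function.update q i s i')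
      = -(c i') * (Function.update q i s i' + p i') := by intro i'; ring
  have h2 : ∀ i', -(c i') * (q i' + p i') = -(c i') * (p i' + q i') := by
    intro i'; ring
  simp only [h1]
  rw [sum_update (fun i' => -(c i')) q p i s]
  simp only [h2]
  have h : (∑ i', -(c i') * (p i' + q i')) + (-(c i)) * (s - q i)
      = (∑ i', -(c i') * (p i' + q i')) + (c i * q i + (-(c i)) * s) := by ring
  rw [h, Real.exp_add, Real.exp_add]
  ring

lemma deriv_sum_exp {M : ℕ} (A c : Fin M → ℝ) :
    deriv (fun s => ∑ m, A m * Real.exp (c m * s))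
      = fun s => ∑ m, (A m * c m) * Real.exp (c m * s) := by
  funext s
  have h : HasDerivAt (fun s => ∑ m, A m * Real.exp (c m * s))
      (∑ m, (A m * c m) * Real.exp (c m * s)) s := by
    apply HasDerivAt.fun_sum
    intro m _
    have := (((hasDerivAt_id s).const_mul (c m)).exp).const_mul (A m)
    convert this using 1
    · rfl
    · rfl
    simp only [id_eq]
    ring
  exact h.deriv

/-- the doubled averaged phase-space transform
`W(t,x,p,q) = (1/M) ∑ₘ (∏ i, √(aᵢ(zₘ)) e^{-√(aᵢ(zₘ))(pᵢ+qᵢ)}) u(t,x,zₘ)` for the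
advection equation with uncertain coefficient satisfies (i) the deterministic third-order
phase-space equation `∂ₜW + ∑ i bᵢ(x) ∑ⱼ ∂_{xⱼ}∂_{pᵢ}∂_{pᵢ} W = 0`, and
(ii) `∂_{pᵢ}W - ∂_{qᵢ}W = 0` for every `i`; neither depends on the samples `zₘ`. -/
theorem advection_phase_space_doubled
    (d L M : ℕ) (hd : 1 ≤ d) (hL : 1 ≤ L) (hM : 1 ≤ M)
    (Z : Type*) [Nonempty Z]
    (a : Fin L → Z → ℝ) (ha : ∀ i z, 0 < a i z)
    (b : Fin L → (Fin d → ℝ) → ℝ) (hb : ∀ i, ContDiff ℝ (⊤ : ℕ∞) (b i))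
    (u : ℝ → (Fin d → ℝ) → Z → ℝ)
    (hu : ∀ z, ContDiff ℝ (⊤ : ℕ∞) (fun tx : ℝ × (Fin d → ℝ) => u tx.1 tx.2 z))
    (hadv : ∀ t x z, deriv (fun s => u s x z) t
      + (∑ i, a i z * b i x) * (∑ j, pd j (fun y => u t y z) x) = 0)
    (zs : Fin M → Z)
    (W : ℝ → (Fin d → ℝ) → (Fin L → ℝ) → (Fin L → ℝ) → ℝ)
    (hW : ∀ t x p q, W t x p q = (1 / (M : ℝ)) * ∑ m,
      (∏ i, Real.sqrt (a i (zs m)) * Real.exp (-Real.sqrt (a i (zs m)) * (p i + q i)))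
        * u t x (zs m)) :
    (∀ t x (p q : Fin L → ℝ),
      deriv (fun s => W s x p q) t
        + ∑ i, b i x * ∑ j, pd j (fun y => pd2 i (fun p' => W t y p' q) p) x = 0)
    ∧ (∀ t x (p q : Fin L → ℝ) (i : Fin L),
        pd i (fun p' => W t x p' q) p - pd i (fun q' => W t x p q') q = 0) := by
  -- notation
  set cf : Fin M → Fin L → ℝ := fun m i => Real.sqrt (a i (zs m)) with hcf
  have hW' : ∀ t x p q, W t x p q
      = ∑ m, ((1 / (M : ℝ)) * u t x (zs m)) * Ef (cf m) p q := by
    intro t x p q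
    rw [hW, Finset.mul_sum]
    refine Finset.sum_congr rfl fun m _ => ?_
    have : (∏ i, Real.sqrt (a i (zs m))
        * Real.exp (-Real.sqrt (a i (zs m)) * (p i + q i))) = Ef (cf m) p q := by
      rw [Ef]
    rw [this]; ring
  -- the p-update of W as a sum of exponentials
  have hfunP : ∀ t x (p q : Fin L → ℝ) (i : Fin L),
      (fun s => W t x (Function.update p i s) q)
        = fun s => ∑ m, (((1 / (M : ℝ)) * u t x (zs m))
            * (Ef (cf m) p q * Real.exp (cf m i * p i)))
          * Real.exp ((-(cf m i)) * s) := by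
    intro t x p q i
    funext s
    rw [hW']
    refine Finset.sum_congr rfl fun m _ => ?_
    rw [Ef_update_left]; ring
  have hfunQ : ∀ t x (p q : Fin L → ℝ) (i : Fin L),
      (fun s => W t x p (Function.update q i s))
        = fun s => ∑ m, (((1 / (M : ℝ)) * u t x (zs m))
            * (Ef (cf m) p q * Real.exp (cf m i * q i)))
          * Real.exp ((-(cf m i)) * s) := by
    intro t x p q i
    funext s
    rw [hW']
    refine Finset.sum_congr rfl fun m _ => ?_
    rw [Ef_update_right]; ring
  have hexp1 : ∀ (c r : ℝ), Real.exp (c * r) * Real.exp (-c * r) = 1 := by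
    intro c r
    rw [← Real.exp_add]
    have : c * r + -c * r = 0 := by ring
    rw [this, Real.exp_zero]
  -- first p-derivative
  have hpdP : ∀ t x (p q : Fin L → ℝ) (i : Fin L),
      pd i (fun p' => W t x p' q) p
        = ∑ m, ((1 / (M : ℝ)) * u t x (zs m)) * (-(cf m i)) * Ef (cf m) p q := by
    intro t x p q i
    rw [pd, hfunP, deriv_sum_exp]
    refine Finset.sum_congr rfl fun m _ => ?_
    have h1 := hexp1 (cf m i) (p i)
    calc ((1 / (M : ℝ)) * u t x (zs m) * (Ef (cf m) p q * Real.exp (cf m i * p i)))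
          * (-(cf m i)) * Real.exp ((-(cf m i)) * p i)
        = ((1 / (M : ℝ)) * u t x (zs m)) * (-(cf m i)) * Ef (cf m) p q
            * (Real.exp (cf m i * p i) * Real.exp (-(cf m i) * p i)) := by ring
      _ = _ := by rw [h1]; ring
  have hpdQ : ∀ t x (p q : Fin L → ℝ) (i : Fin L),
      pd i (fun q' => W t x p q') q
        = ∑ m, ((1 / (M : ℝ)) * u t x (zs m)) * (-(cf m i)) * Ef (cf m) p q := by
    intro t x p q i
    rw [pd, hfunQ, deriv_sum_exp]
    refine Finset.sum_congr rfl fun m _ => ?_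
    have h1 := hexp1 (cf m i) (q i)
    calc ((1 / (M : ℝ)) * u t x (zs m) * (Ef (cf m) p q * Real.exp (cf m i * q i)))
          * (-(cf m i)) * Real.exp ((-(cf m i)) * q i)
        = ((1 / (M : ℝ)) * u t x (zs m)) * (-(cf m i)) * Ef (cf m) p q
            * (Real.exp (cf m i * q i) * Real.exp (-(cf m i) * q i)) := by ring
      _ = _ := by rw [h1]; ring
  -- second p-derivative
  have hpd2 : ∀ t x (p q : Fin L → ℝ) (i : Fin L),
      pd2 i (fun p' => W t x p' q) p
        = ∑ m, (((1 / (M : ℝ)) * (a i (zs m))) * Ef (cf m) p q) * u t x (zs m) := by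
    intro t x p q i
    rw [pd2, hfunP, deriv_sum_exp, deriv_sum_exp]
    refine Finset.sum_congr rfl fun m _ => ?_
    have h1 := hexp1 (cf m i) (p i)
    have h2 : cf m i * cf m i = a i (zs m) := Real.mul_self_sqrt (ha i (zs m)).le
    calc ((1 / (M : ℝ)) * u t x (zs m) * (Ef (cf m) p q * Real.exp (cf m i * p i))
            * (-(cf m i))) * (-(cf m i)) * Real.exp ((-(cf m i)) * p i)
        = ((1 / (M : ℝ)) * (cf m i * cf m i)) * Ef (cf m) p q * u t x (zs m)
            * (Real.exp (cf m i * p i) * Real.exp (-(cf m i) * p i)) := by ring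
      _ = _ := by rw [h1, h2]; ring
  -- differentiability of u in each direction
  have hux : ∀ z t (x : Fin d → ℝ) (j : Fin d),
      DifferentiableAt ℝ (fun s => u t (Function.update x j s) z) (x j) := by
    intro z t x j
    exact (((hu z).differentiable (by simp)).comp
      ((differentiable_const t).prodMk (diff_update x j))).differentiableAt
  have hut : ∀ z (x : Fin d → ℝ) t,
      DifferentiableAt ℝ (fun s => u s x z) t := by
    intro z x t
    exact (((hu z).differentiable (by simp)).comp
      (differentiable_id.prodMk (differentiable_const x))).differentiableAt
  constructor
  · intro t x p q
    -- time derivative of W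
    have hDt : deriv (fun s => W s x p q) t
        = ∑ m, ((1 / (M : ℝ)) * Ef (cf m) p q) * deriv (fun s => u s x (zs m)) t := by
      have hfun : (fun s => W s x p q)
          = fun s => ∑ m, ((1 / (M : ℝ)) * Ef (cf m) p q) * u s x (zs m) := by
        funext s
        rw [hW']
        exact Finset.sum_congr rfl fun m _ => by ring
      rw [hfun, deriv_fun_sum (fun m _ => ((hut (zs m) x t).const_mul _))]
      exact Finset.sum_congr rfl fun m _ => deriv_const_mul _ (hut (zs m) x t)
    -- x-derivative of the second p-derivative
    have hDx : ∀ (i : Fin L) (j : Fin d),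
        pd j (fun y => pd2 i (fun p' => W t y p' q) p) x
          = ∑ m, (((1 / (M : ℝ)) * (a i (zs m))) * Ef (cf m) p q)
              * pd j (fun y => u t y (zs m)) x := by
      intro i j
      have hfun : (fun y => pd2 i (fun p' => W t y p' q) p)
          = fun y => ∑ m, (((1 / (M : ℝ)) * (a i (zs m))) * Ef (cf m) p q)
              * u t y (zs m) := by
        funext y; exact hpd2 t y p q i
      rw [hfun, pd,
        deriv_fun_sum (fun m _ => ((hux (zs m) t x j).const_mul _))]
      exact Finset.sum_congr rfl fun m _ =>
        (deriv_const_mul _ (hux (zs m) t x j)).trans rfl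
    rw [hDt]
    simp only [hDx]
    -- rearrange sums
    have key : ∀ m : Fin M, deriv (fun s => u s x (zs m)) t
        + (∑ i, a i (zs m) * b i x) * (∑ j, pd j (fun y => u t y (zs m)) x) = 0 :=
      fun m => hadv t x (zs m)
    have expand : ∑ i, b i x * ∑ j, ∑ m,
          (((1 / (M : ℝ)) * (a i (zs m))) * Ef (cf m) p q)
            * pd j (fun y => u t y (zs m)) x
        = ∑ m, ((1 / (M : ℝ)) * Ef (cf m) p q)
            * ((∑ i, a i (zs m) * b i x) * (∑ j, pd j (fun y => u t y (zs m)) x)) := by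
      simp only [Finset.mul_sum, Finset.sum_mul]
      rw [Finset.sum_comm]
      refine (Finset.sum_congr rfl fun j _ => Finset.sum_comm).trans ?_
      rw [Finset.sum_comm]
      exact Finset.sum_congr rfl fun m _ =>
        Finset.sum_congr rfl fun j _ => Finset.sum_congr rfl fun i _ => by ring
    rw [expand, ← Finset.sum_add_distrib]
    have : ∀ m : Fin M, ((1 / (M : ℝ)) * Ef (cf m) p q) * deriv (fun s => u s x (zs m)) t
        + ((1 / (M : ℝ)) * Ef (cf m) p q)
            * ((∑ i, a i (zs m) * b i x) * (∑ j, pd j (fun y => u t y (zs m)) x))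
        = 0 := by
      intro m
      rw [← mul_add, key m, mul_zero]
    simp only [this, Finset.sum_const_zero]
  · intro t x p q i
    rw [hpdP, hpdQ, sub_self]
end
end

section
/- Let n ≥ 1 and N_t ≥ 1 be integers and let B be an n × n real (or complex) matrix. Let L be the (N_t n) × (N_t n) block lower bidiagonal matrix whose (i,i) blocks are the n × n identity matrix I, whose (i+1,i) blocks are −B, and whose other blocks are zero. Then the operator (spectral) norm of L⁻¹ satisfies ‖L⁻¹‖₂ ≤ Σ_{k=0}^{N_t−1} ‖B‖₂^k. In particular, if ‖B‖₂ ≤ 1, then ‖L⁻¹‖₂ ≤ N_t, and hence the smallest singular value of L satisfies σ_min(L) ≥ 1/N_t. -/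
noncomputable section

/-- The spectral (ℓ²-operator) norm of a real square matrix. -/
def matrixSpectralNorm {m : Type*} [Fintype m] [DecidableEq m] (A : Matrix m m ℝ) : ℝ :=
  ‖(Matrix.toEuclideanLin A).toContinuousLinearMap‖

open scoped Matrix.Norms.L2Operator
open Matrix

lemma spectralNorm_eq_norm {m : Type*} [Fintype m] [DecidableEq m] (A : Matrix m m ℝ) :
    matrixSpectralNorm A = ‖A‖ := rfl

lemma norm_one_le_one (m : Type*) [Fintype m] [DecidableEq m] [Nonempty m] :
    ‖(1 : Matrix m m ℝ)‖ ≤ 1 := by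
  rw [Matrix.cstar_norm_def, _root_.map_one]
  exact ContinuousLinearMap.norm_id_le

lemma shift_block_norm_le {n Nt : ℕ}
    (B : Matrix (Fin n) (Fin n) ℝ)
    (N : Matrix (Fin Nt × Fin n) (Fin Nt × Fin n) ℝ)
    (hN : ∀ (i j : Fin Nt) (a b : Fin n), N (i, a) (j, b) =
      if i.val = j.val + 1 then B a b else 0) :
    ‖N‖ ≤ ‖B‖ := by
  rw [Matrix.l2_opNorm_def]
  apply ContinuousLinearMap.opNorm_le_bound _ (norm_nonneg (B : Matrix (Fin n) (Fin n) ℝ))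
  intro x
  set y : EuclideanSpace ℝ (Fin Nt × Fin n) := Matrix.toEuclideanLin N x with hy
  show ‖y‖ ≤ ‖B‖ * ‖x‖
  -- slices of x
  set s : ℕ → EuclideanSpace ℝ (Fin n) :=
    fun j => if h : j < Nt then WithLp.toLp 2 (fun b => x (⟨j, h⟩, b)) else 0 with hs
  -- entry formula for y
  have hyent : ∀ (i : Fin Nt) (a : Fin n),
      y (i, a) = if h : 0 < i.val then (B *ᵥ (s (i.val - 1))) a else 0 := by
    intro i a
    have : y (i, a) = ∑ p : Fin Nt × Fin n, N (i, a) p * x p := rfl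
    rw [this, Fintype.sum_prod_type]
    by_cases h : 0 < i.val
    · have hm : i.val - 1 < Nt := lt_of_le_of_lt (Nat.sub_le _ _) i.isLt
      rw [dif_pos h]
      rw [Finset.sum_eq_single (⟨i.val - 1, hm⟩ : Fin Nt)]
      · simp only [hN, Nat.sub_add_cancel h, if_pos rfl]
        simp [Matrix.mulVec, dotProduct, hs, hm]
      · intro j _ hj
        apply Finset.sum_eq_zero
        intro b _
        rw [hN]
        rw [if_neg, zero_mul]
        intro hcon
        exact absurd (Fin.ext (show j.val = i.val - 1 by omega)) hj
      · intro hcon; exact absurd (Finset.mem_univ _) hcon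
    · rw [dif_neg h]
      apply Finset.sum_eq_zero
      intro j _
      apply Finset.sum_eq_zero
      intro b _
      rw [hN, if_neg (by omega), zero_mul]
  have hBnn : (0:ℝ) ≤ ‖B‖ := norm_nonneg _
  -- squared norms
  have hynorm : ‖y‖ = Real.sqrt (∑ i : Fin Nt, ∑ a : Fin n, ‖y (i, a)‖ ^ 2) := by
    rw [EuclideanSpace.norm_eq, Fintype.sum_prod_type]
  have hxnorm : ‖x‖ ^ 2 = ∑ j : Fin Nt, ∑ b : Fin n, ‖x (j, b)‖ ^ 2 := by
    rw [EuclideanSpace.norm_eq, Real.sq_sqrt (by positivity), Fintype.sum_prod_type]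
  -- slice norms
  have hsnorm : ∀ j : Fin Nt, ‖s j.val‖ ^ 2 = ∑ b : Fin n, ‖x (j, b)‖ ^ 2 := by
    intro j
    rw [EuclideanSpace.norm_eq, Real.sq_sqrt (by positivity)]
    apply Finset.sum_congr rfl
    intro b _
    simp [hs, j.isLt]
  -- main inequality on squares
  have key : (∑ i : Fin Nt, ∑ a : Fin n, ‖y (i, a)‖ ^ 2) ≤ ‖B‖ ^ 2 * ‖x‖ ^ 2 := by
    have step : ∀ i : Fin Nt, (∑ a : Fin n, ‖y (i, a)‖ ^ 2) ≤
        ‖B‖ ^ 2 * (if h : 0 < i.val then ‖s (i.val - 1)‖ ^ 2 else 0) := by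
      intro i
      by_cases h : 0 < i.val
      · rw [dif_pos h]
        have h1 : (∑ a : Fin n, ‖y (i, a)‖ ^ 2) =
            ‖(WithLp.equiv 2 (Fin n → ℝ)).symm (B *ᵥ (s (i.val - 1)))‖ ^ 2 := by
          rw [EuclideanSpace.norm_eq, Real.sq_sqrt (by positivity)]
          apply Finset.sum_congr rfl
          intro a _
          rw [hyent i a, dif_pos h]
          rfl
        rw [h1]
        have h2 : ‖(WithLp.equiv 2 (Fin n → ℝ)).symm (B *ᵥ (s (i.val - 1)))‖ ≤
            ‖B‖ * ‖s (i.val - 1)‖ := Matrix.l2_opNorm_mulVec B _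
        calc ‖(WithLp.equiv 2 (Fin n → ℝ)).symm (B *ᵥ (s (i.val - 1)))‖ ^ 2
            ≤ (‖B‖ * ‖s (i.val - 1)‖) ^ 2 := by
              apply pow_le_pow_left₀ (norm_nonneg _) h2
          _ = ‖B‖ ^ 2 * ‖s (i.val - 1)‖ ^ 2 := by ring
      · rw [dif_neg h]
        simp only [mul_zero]
        apply le_of_eq
        apply Finset.sum_eq_zero
        intro a _
        rw [hyent i a, dif_neg h]
        simp
    calc (∑ i : Fin Nt, ∑ a : Fin n, ‖y (i, a)‖ ^ 2)
        ≤ ∑ i : Fin Nt, ‖B‖ ^ 2 * (if h : 0 < i.val then ‖s (i.val - 1)‖ ^ 2 else 0) :=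
          Finset.sum_le_sum (fun i _ => step i)
      _ = ‖B‖ ^ 2 * ∑ i : Fin Nt, (if h : 0 < i.val then ‖s (i.val - 1)‖ ^ 2 else 0) := by
          rw [Finset.mul_sum]
      _ ≤ ‖B‖ ^ 2 * ‖x‖ ^ 2 := by
          apply mul_le_mul_of_nonneg_left _ (by positivity)
          -- ∑ over i of shifted slice norms ≤ ∑ over all slices
          have hG : ∀ j : ℕ, (if h : j < Nt then ‖s j‖ ^ 2 else 0) =
              (if h : j < Nt then ∑ b : Fin n, ‖x (⟨j, h⟩, b)‖ ^ 2 else 0) := by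
            intro j
            by_cases h : j < Nt
            · rw [dif_pos h, dif_pos h, ← hsnorm ⟨j, h⟩]
            · rw [dif_neg h, dif_neg h]
          set G : ℕ → ℝ := fun j => if h : j < Nt then ‖s j‖ ^ 2 else 0 with hGdef
          have hGnn : ∀ j, 0 ≤ G j := by
            intro j; simp only [hGdef]; split <;> positivity
          have left_eq : (∑ i : Fin Nt, (if h : 0 < i.val then ‖s (i.val - 1)‖ ^ 2 else 0)) =
              ∑ i ∈ Finset.range Nt, (if 0 < i then G (i - 1) else 0) := by
            rw [← Fin.sum_univ_eq_sum_range (fun i => if 0 < i then G (i - 1) else 0) Nt]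
            apply Finset.sum_congr rfl
            intro i _
            by_cases h : 0 < i.val
            · rw [dif_pos h, if_pos h]
              simp only [hGdef]
              rw [dif_pos (lt_of_le_of_lt (Nat.sub_le _ _) i.isLt)]
            · rw [dif_neg h, if_neg h]
          have right_eq : ‖x‖ ^ 2 = ∑ j ∈ Finset.range Nt, G j := by
            rw [hxnorm, ← Fin.sum_univ_eq_sum_range G Nt]
            apply Finset.sum_congr rfl
            intro j _
            simp only [hGdef, dif_pos j.isLt]
            rw [hsnorm j]
          rw [left_eq, right_eq]
          cases Nt with
          | zero => simp
          | succ m =>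
            rw [Finset.sum_range_succ' (fun i => if 0 < i then G (i - 1) else 0) m]
            simp only [Nat.succ_pos, if_pos, Nat.add_sub_cancel, lt_irrefl, if_neg, add_zero,
              if_true, if_false]
            calc (∑ i ∈ Finset.range m, G i)
                ≤ (∑ i ∈ Finset.range m, G i) + G m := le_add_of_nonneg_right (hGnn m)
              _ = ∑ j ∈ Finset.range (m + 1), G j := (Finset.sum_range_succ G m).symm
  rw [hynorm]
  calc Real.sqrt (∑ i : Fin Nt, ∑ a : Fin n, ‖y (i, a)‖ ^ 2)
      ≤ Real.sqrt (‖B‖ ^ 2 * ‖x‖ ^ 2) := Real.sqrt_le_sqrt key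
    _ = ‖B‖ * ‖x‖ := by
        rw [← mul_pow, Real.sqrt_sq (by positivity)]

lemma shift_block_pow_zero {n Nt : ℕ}
    (B : Matrix (Fin n) (Fin n) ℝ)
    (N : Matrix (Fin Nt × Fin n) (Fin Nt × Fin n) ℝ)
    (hN : ∀ (i j : Fin Nt) (a b : Fin n), N (i, a) (j, b) =
      if i.val = j.val + 1 then B a b else 0) :
    ∀ (k : ℕ) (i j : Fin Nt) (a b : Fin n), i.val < j.val + k → (N ^ k) (i, a) (j, b) = 0 := by
  intro k
  induction k with
  | zero =>
    intro i j a b hij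
    rw [pow_zero]
    apply Matrix.one_apply_ne
    intro hc
    rw [Prod.mk.injEq] at hc
    have := congrArg Fin.val hc.1
    omega
  | succ k ih =>
    intro i j a b hij
    rw [pow_succ']
    show ∑ p : Fin Nt × Fin n, N (i, a) p * (N ^ k) p (j, b) = 0
    apply Finset.sum_eq_zero
    rintro ⟨l, c⟩ _
    by_cases h : i.val = l.val + 1
    · rw [ih l j c b (by omega), mul_zero]
    · rw [hN, if_neg h, zero_mul]

/-- for the block lower bidiagonal matrix `L` (identity diagonal blocks,
`-B` sub-diagonal blocks) one has `‖L⁻¹‖₂ ≤ ∑_{k<N_t} ‖B‖₂^k`; in particular, if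
`‖B‖₂ ≤ 1` then `‖L⁻¹‖₂ ≤ N_t`, and the smallest singular value of `L` is at least
`1/N_t`, i.e. `‖x‖/N_t ≤ ‖L x‖` for every vector `x`. -/
theorem block_bidiagonal_inverse_norm_bound
    (n Nt : ℕ) (hn : 1 ≤ n) (hNt : 1 ≤ Nt)
    (B : Matrix (Fin n) (Fin n) ℝ)
    (L : Matrix (Fin Nt × Fin n) (Fin Nt × Fin n) ℝ)
    (hL : ∀ (i j : Fin Nt) (k l : Fin n), L (i, k) (j, l) =
      if i = j then (if k = l then 1 else 0)
      else if i.val = j.val + 1 then -B k l else 0) :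
    matrixSpectralNorm L⁻¹ ≤ ∑ k ∈ Finset.range Nt, matrixSpectralNorm B ^ k
    ∧ (matrixSpectralNorm B ≤ 1 →
        matrixSpectralNorm L⁻¹ ≤ (Nt : ℝ)
        ∧ ∀ x : EuclideanSpace ℝ (Fin Nt × Fin n),
            ‖x‖ / (Nt : ℝ) ≤ ‖Matrix.toEuclideanLin L x‖) := by
  haveI : Nonempty (Fin Nt × Fin n) :=
    ⟨(⟨0, hNt⟩, ⟨0, hn⟩)⟩
  set N : Matrix (Fin Nt × Fin n) (Fin Nt × Fin n) ℝ := 1 - L with hNdef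
  have hN : ∀ (i j : Fin Nt) (a b : Fin n), N (i, a) (j, b) =
      if i.val = j.val + 1 then B a b else 0 := by
    intro i j a b
    have h1 : N (i, a) (j, b) = (1 : Matrix (Fin Nt × Fin n) (Fin Nt × Fin n) ℝ) (i, a) (j, b)
        - L (i, a) (j, b) := rfl
    rw [h1, hL, Matrix.one_apply]
    by_cases hij : i = j
    · subst hij
      simp only [if_pos rfl, Prod.mk.injEq, true_and]
      by_cases hab : a = b <;> simp [hab, show ¬ (i.val = i.val + 1) by omega]
    · rw [if_neg hij, if_neg (by simp [Prod.mk.injEq]; intro h; exact absurd h hij)]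
      by_cases hc : i.val = j.val + 1 <;> simp [hc]
  have hLeq : L = 1 - N := by rw [hNdef]; rw [sub_sub_cancel]
  have hNpow : N ^ Nt = 0 := by
    ext ⟨i, a⟩ ⟨j, b⟩
    rw [Matrix.zero_apply]
    exact shift_block_pow_zero B N hN Nt i j a b (lt_of_lt_of_le i.isLt (Nat.le_add_left _ _))
  set S : Matrix (Fin Nt × Fin n) (Fin Nt × Fin n) ℝ := ∑ k ∈ Finset.range Nt, N ^ k with hS
  have hLS : L * S = 1 := by
    have := mul_geom_sum N Nt
    rw [hNpow] at this
    rw [hLeq, hS]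
    calc (1 - N) * ∑ k ∈ Finset.range Nt, N ^ k
        = -((N - 1) * ∑ k ∈ Finset.range Nt, N ^ k) := by rw [← neg_sub, neg_mul]
      _ = 1 := by rw [this]; simp
  have hSL : S * L = 1 := by
    have := geom_sum_mul N Nt
    rw [hNpow] at this
    rw [hLeq, hS]
    calc (∑ k ∈ Finset.range Nt, N ^ k) * (1 - N)
        = -((∑ k ∈ Finset.range Nt, N ^ k) * (N - 1)) := by rw [← neg_sub, mul_neg]
      _ = 1 := by rw [this]; simp
  have hLinv : L⁻¹ = S := Matrix.inv_eq_right_inv hLS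
  have hNB : ‖N‖ ≤ ‖B‖ := shift_block_norm_le B N hN
  have hBnn : (0:ℝ) ≤ ‖B‖ := norm_nonneg _
  have hpow : ∀ k : ℕ, ‖N ^ k‖ ≤ ‖B‖ ^ k := by
    intro k
    cases k with
    | zero => rw [pow_zero, pow_zero]; exact norm_one_le_one (Fin Nt × Fin n)
    | succ k =>
      calc ‖N ^ (k+1)‖ ≤ ‖N‖ ^ (k+1) := norm_pow_le' N (Nat.succ_pos k)
        _ ≤ ‖B‖ ^ (k+1) := pow_le_pow_left₀ (norm_nonneg _) hNB _
  have hmain : matrixSpectralNorm L⁻¹ ≤ ∑ k ∈ Finset.range Nt, matrixSpectralNorm B ^ k := by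
    rw [spectralNorm_eq_norm, hLinv, hS]
    calc ‖∑ k ∈ Finset.range Nt, N ^ k‖ ≤ ∑ k ∈ Finset.range Nt, ‖N ^ k‖ :=
          norm_sum_le _ _
      _ ≤ ∑ k ∈ Finset.range Nt, ‖B‖ ^ k := Finset.sum_le_sum fun k _ => hpow k
      _ = ∑ k ∈ Finset.range Nt, matrixSpectralNorm B ^ k := by
          simp [spectralNorm_eq_norm]
  refine ⟨hmain, fun hB1 => ?_⟩
  have hB1' : ‖B‖ ≤ 1 := by rwa [spectralNorm_eq_norm] at hB1
  have hNt' : matrixSpectralNorm L⁻¹ ≤ (Nt : ℝ) := by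
    calc matrixSpectralNorm L⁻¹ ≤ ∑ k ∈ Finset.range Nt, matrixSpectralNorm B ^ k := hmain
      _ ≤ ∑ k ∈ Finset.range Nt, 1 := Finset.sum_le_sum fun k _ =>
          pow_le_one₀ (by rw [spectralNorm_eq_norm]; exact hBnn) hB1
      _ = (Nt : ℝ) := by simp
  refine ⟨hNt', fun x => ?_⟩
  have hNtpos : (0:ℝ) < (Nt : ℝ) := by
    exact_mod_cast hNt
  rw [div_le_iff₀ hNtpos]
  have hinvL : L⁻¹ * L = 1 := by rw [hLinv]; exact hSL
  have hxid : Matrix.toEuclideanLin L⁻¹ (Matrix.toEuclideanLin L x) = x := by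
    rw [Matrix.toEuclideanLin_apply, Matrix.toEuclideanLin_apply]
    simp only [Equiv.apply_symm_apply]
    rw [Matrix.mulVec_mulVec, hinvL, Matrix.one_mulVec]
  have hle : ‖x‖ ≤ ‖L⁻¹‖ * ‖Matrix.toEuclideanLin L x‖ := by
    conv_lhs => rw [← hxid]
    rw [Matrix.l2_opNorm_def]
    exact ((Matrix.toEuclideanLin.trans LinearMap.toContinuousLinearMap) L⁻¹).le_opNorm _
  calc ‖x‖ ≤ ‖L⁻¹‖ * ‖Matrix.toEuclideanLin L x‖ := hle
    _ ≤ (Nt : ℝ) * ‖Matrix.toEuclideanLin L x‖ := by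
        apply mul_le_mul_of_nonneg_right _ (norm_nonneg _)
        rw [← spectralNorm_eq_norm]; exact hNt'
    _ = ‖Matrix.toEuclideanLin L x‖ * (Nt : ℝ) := mul_comm _ _
end
end

section
/- Let N ≥ 1 be an integer and let μ ∈ ℝ with −1 ≤ μ ≤ 0. Let C be the N × N real upper bidiagonal matrix with all diagonal entries equal to 1 + μ, all entries on the first super-diagonal equal to −μ, and all other entries 0. Then the spectral norm of C satisfies ‖C‖₂ ≤ 1. -/
noncomputable section

/-- the `N × N` upper bidiagonal matrix with diagonal entries `1 + μ` and
super-diagonal entries `-μ`, for `-1 ≤ μ ≤ 0`, has spectral norm at most `1`. -/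
theorem bidiagonal_spectral_norm_le_one
    (N : ℕ) (hN : 1 ≤ N)
    (μ : ℝ) (hμ₁ : -1 ≤ μ) (hμ₂ : μ ≤ 0)
    (C : Matrix (Fin N) (Fin N) ℝ)
    (hC : ∀ i j : Fin N, C i j =
      if i = j then 1 + μ else if i.val + 1 = j.val then -μ else 0) :
    matrixSpectralNorm C ≤ 1 := by
  have hμ3 : (0:ℝ) ≤ 1 + μ := by linarith
  have hμ4 : (0:ℝ) ≤ -μ := by linarith
  rw [matrixSpectralNorm]
  apply ContinuousLinearMap.opNorm_le_bound _ zero_le_one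
  intro x
  rw [one_mul]
  set y : ℕ → ℝ := fun j => if h : j < N then x ⟨j, h⟩ else 0 with hy
  have hyN : ∀ j, N ≤ j → y j = 0 := by
    intro j hj
    simp [hy, Nat.not_lt.mpr hj]
  have key : ∀ i : Fin N, C.mulVec (fun j => x j) i = (1 + μ) * y i + (-μ) * y (i.val + 1) := by
    intro i
    have step : C.mulVec (fun j => x j) i
        = ∑ j : Fin N, ((if j = i then (1 + μ) * x j else 0)
            + (if (j : ℕ) = i.val + 1 then (-μ) * x j else 0)) := by
      unfold Matrix.mulVec dotProduct
      apply Finset.sum_congr rfl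
      intro j _
      show C i j * x j = _
      rw [hC i j]
      rcases eq_or_ne j i with h | h
      · subst h
        have hne : (j:ℕ) ≠ (j:ℕ) + 1 := by omega
        simp [hne]
      · have h' : i ≠ j := fun hh => h hh.symm
        rw [if_neg h', if_neg h]
        rcases eq_or_ne ((j:ℕ)) ((i:ℕ)+1) with h2 | h2
        · rw [if_pos h2.symm, if_pos h2]; ring
        · have h2' : (i:ℕ)+1 ≠ (j:ℕ) := fun hh => h2 hh.symm
          rw [if_neg h2', if_neg h2]; ring
    rw [step, Finset.sum_add_distrib, Finset.sum_ite_eq' Finset.univ i (fun j => (1 + μ) * x j)]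
    simp only [Finset.mem_univ, if_true]
    have hxi : y i.val = x i := by simp [hy, i.isLt]
    rw [hxi]
    congr 1
    by_cases h : i.val + 1 < N
    · have e1 : ∑ j : Fin N, (if (j : ℕ) = i.val + 1 then (-μ) * x j else 0)
          = ∑ j : Fin N, (if j = (⟨i.val + 1, h⟩ : Fin N) then (-μ) * x j else 0) := by
        apply Finset.sum_congr rfl
        intro j _
        congr 1
        simp [Fin.ext_iff]
      rw [e1, Finset.sum_ite_eq' Finset.univ (⟨i.val + 1, h⟩ : Fin N) (fun j => (-μ) * x j)]
      simp [hy, h]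
    · have hyz : y (i.val + 1) = 0 := hyN _ (Nat.not_lt.mp h)
      rw [hyz, mul_zero]
      apply Finset.sum_eq_zero
      intro j _
      have : (j : ℕ) ≠ i.val + 1 := by
        intro hh; exact h (hh ▸ j.isLt)
      simp [this]
  -- square bound per entry
  have sq : ∀ i : Fin N,
      ((1 + μ) * y i + (-μ) * y (i.val + 1))^2
        ≤ (1 + μ) * (y i)^2 + (-μ) * (y (i.val + 1))^2 := by
    intro i
    nlinarith [mul_nonneg (mul_nonneg hμ3 hμ4) (sq_nonneg (y i - y (i.val + 1))),
      sq_nonneg (y i - y (i.val + 1))]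
  -- shift sum bound
  have shift : ∑ i : Fin N, (y (i.val + 1))^2 ≤ ∑ i : Fin N, (y i.val)^2 := by
    rw [Fin.sum_univ_eq_sum_range (fun j => (y (j+1))^2),
        Fin.sum_univ_eq_sum_range (fun j => (y j)^2)]
    have h1 : ∑ j ∈ Finset.range N, (y (j+1))^2 = ∑ j ∈ Finset.Ico 1 (N+1), (y j)^2 := by
      rw [Finset.sum_Ico_eq_sum_range]
      simp [add_comm]
    rw [h1]
    have h2 : ∑ j ∈ Finset.Ico 1 (N+1), (y j)^2 = ∑ j ∈ Finset.Ico 1 N, (y j)^2 := by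
      rw [Finset.sum_Ico_succ_top hN, hyN N le_rfl]
      simp
    rw [h2]
    apply Finset.sum_le_sum_of_subset_of_nonneg
    · intro j hj
      simp only [Finset.mem_Ico] at hj
      exact Finset.mem_range.mpr hj.2
    · intro j _ _; positivity
  -- main sum bound
  have main : ∑ i : Fin N, (C.mulVec (fun j => x j) i)^2 ≤ ∑ i : Fin N, (x i)^2 := by
    have hxy : ∀ i : Fin N, x i = y i.val := by
      intro i; simp [hy, i.isLt]
    calc ∑ i : Fin N, (C.mulVec (fun j => x j) i)^2
        ≤ ∑ i : Fin N, ((1 + μ) * (y i.val)^2 + (-μ) * (y (i.val + 1))^2) := by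
          apply Finset.sum_le_sum
          intro i _
          rw [key i]
          exact sq i
      _ = (1 + μ) * ∑ i : Fin N, (y i.val)^2 + (-μ) * ∑ i : Fin N, (y (i.val + 1))^2 := by
          rw [Finset.sum_add_distrib, Finset.mul_sum, Finset.mul_sum]
      _ ≤ (1 + μ) * ∑ i : Fin N, (y i.val)^2 + (-μ) * ∑ i : Fin N, (y i.val)^2 := by
          gcongr
      _ = ∑ i : Fin N, (y i.val)^2 := by ring
      _ = ∑ i : Fin N, (x i)^2 := by
          apply Finset.sum_congr rfl
          intro i _
          rw [hxy i]
  -- conclude via Euclidean norms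
  have hnorm : ∀ z : EuclideanSpace ℝ (Fin N), ‖z‖ = Real.sqrt (∑ i, (z i)^2) := by
    intro z
    rw [EuclideanSpace.norm_eq]
    congr 1
    apply Finset.sum_congr rfl
    intro i _
    rw [Real.norm_eq_abs, sq_abs]
  have happ : ∀ i : Fin N,
      ((Matrix.toEuclideanLin C).toContinuousLinearMap x) i
        = C.mulVec (fun j => x j) i := fun i => rfl
  rw [hnorm, hnorm]
  apply Real.sqrt_le_sqrt
  calc ∑ i, (((Matrix.toEuclideanLin C).toContinuousLinearMap x) i)^2
      = ∑ i : Fin N, (C.mulVec (fun j => x j) i)^2 := by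
        apply Finset.sum_congr rfl; intro i _; rw [happ i]
    _ ≤ ∑ i, (x i)^2 := main
end
end
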